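/- arXiv:2207.11851 — 6 statements merged into one kernel-verified Lean document; each statement's English description precedes it below -/
import Mathlib

section
/- Let Z be a compact abelian group, α, β ∈ Z, and χ a continuous character of Z such that χ(α) and χ(β) are not both roots of unity. Then lim_{N→∞} (1/N) ∑_{n=1}^N χ(nα + n²β) = 0. -/
open Filter Finset Complex

-- geometric sum bounds
private lemma geom_range_bound {w : ℂ} (hw : ‖w‖ ≤ 1) (hw1 : w ≠ 1) (N : ℕ) :
    ‖∑ n ∈ Finset.range N, w ^ n‖ ≤ 2 / ‖1 - w‖ := by
  rw [geom_sum_eq hw1, norm_div, norm_sub_rev w 1]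
  have h1 : ‖w ^ N - 1‖ ≤ 2 := by
    calc ‖w ^ N - 1‖ ≤ ‖w ^ N‖ + ‖(1:ℂ)‖ := norm_sub_le _ _
    _ ≤ 1 + 1 := by
        rw [norm_pow, norm_one]
        exact add_le_add (pow_le_one₀ (norm_nonneg _) hw) le_rfl
    _ = 2 := by norm_num
  have h2 : (0:ℝ) < ‖1 - w‖ := by
    rw [norm_pos_iff, sub_ne_zero]
    exact fun e => hw1 e.symm
  gcongr

private lemma geom_Icc_bound {w : ℂ} (hw : ‖w‖ = 1) (hw1 : w ≠ 1) (N : ℕ) :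
    ‖∑ n ∈ Finset.Icc 1 N, w ^ n‖ ≤ 2 / ‖1 - w‖ := by
  have : ∑ n ∈ Finset.Icc 1 N, w ^ n = w * ∑ n ∈ Finset.range N, w ^ n := by
    rw [show Finset.Icc 1 N = Finset.Ioc 0 N from Finset.Icc_add_one_left_eq_Ioc 0 N]
    induction N with
    | zero => simp
    | succ n ih =>
        rw [Finset.sum_Ioc_succ_top (Nat.zero_le _), Finset.sum_range_succ, mul_add, ih,
          pow_succ, mul_comm w]
        ring
  rw [this, norm_mul, hw, one_mul]
  exact geom_range_bound hw.le hw1 N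

private lemma norm_sum_le_card (f : ℕ → ℂ) (hf : ∀ n, ‖f n‖ ≤ 1) (s : Finset ℕ) :
    ‖∑ n ∈ s, f n‖ ≤ s.card := by
  calc ‖∑ n ∈ s, f n‖ ≤ ∑ n ∈ s, ‖f n‖ := norm_sum_le _ _
  _ ≤ ∑ n ∈ s, 1 := Finset.sum_le_sum fun n _ => hf n
  _ = s.card := by simp

private lemma Icc_one_eq_Ioc (N : ℕ) : Finset.Icc 1 N = Finset.Ioc 0 N :=
  Finset.Icc_add_one_left_eq_Ioc 0 N

-- shifted sums
private lemma sum_shift (f : ℕ → ℂ) (N h : ℕ) :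
    ∑ n ∈ Finset.Icc 1 N, f (n + h) = ∑ n ∈ Finset.Ioc h (N + h), f n := by
  rw [show Finset.Ioc h (N + h) = Finset.Icc (1 + h) (N + h) by
        rw [add_comm 1 h, Finset.Icc_add_one_left_eq_Ioc],
      ← Finset.map_add_right_Icc, Finset.sum_map]
  rfl

private lemma shift_diff (f : ℕ → ℂ) (hf : ∀ n, ‖f n‖ ≤ 1) (N h : ℕ) :
    ‖∑ n ∈ Finset.Icc 1 N, f (n + h) - ∑ n ∈ Finset.Icc 1 N, f n‖ ≤ 2 * h := by
  have e1 : ∑ n ∈ Finset.Ioc 0 N, f n + ∑ n ∈ Finset.Ioc N (N + h), f n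
      = ∑ n ∈ Finset.Ioc 0 (N + h), f n :=
    Finset.sum_Ioc_consecutive f (Nat.zero_le N) (Nat.le_add_right N h)
  have e2 : ∑ n ∈ Finset.Ioc 0 h, f n + ∑ n ∈ Finset.Ioc h (N + h), f n
      = ∑ n ∈ Finset.Ioc 0 (N + h), f n :=
    Finset.sum_Ioc_consecutive f (Nat.zero_le h) (Nat.le_add_left h N)
  rw [sum_shift, Icc_one_eq_Ioc]
  have e3 : ∑ n ∈ Finset.Ioc h (N + h), f n - ∑ n ∈ Finset.Ioc 0 N, f n
      = ∑ n ∈ Finset.Ioc N (N + h), f n - ∑ n ∈ Finset.Ioc 0 h, f n := by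
    have := e1.trans e2.symm
    linear_combination -this
  rw [e3]
  calc ‖_ - _‖ ≤ ‖∑ n ∈ Finset.Ioc N (N + h), f n‖ + ‖∑ n ∈ Finset.Ioc 0 h, f n‖ :=
        norm_sub_le _ _
  _ ≤ (Finset.Ioc N (N + h)).card + (Finset.Ioc 0 h).card :=
        add_le_add (norm_sum_le_card f hf _) (norm_sum_le_card f hf _)
  _ ≤ 2 * h := by
        rw [Nat.card_Ioc, Nat.card_Ioc, Nat.add_sub_cancel_left, Nat.sub_zero, two_mul]


-- Case 1: quasiperiodic sequences have bounded partial sums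
private lemma quasiperiodic_bounded (g : ℕ → ℂ) (m : ℕ) (hm : 0 < m) (c : ℂ)
    (hc : ‖c‖ = 1) (hc1 : c ≠ 1) (hg : ∀ n, ‖g n‖ ≤ 1)
    (hper : ∀ n, g (n + m) = c * g n) (N : ℕ) :
    ‖∑ n ∈ Finset.Icc 1 N, g n‖ ≤ 2 * m / ‖1 - c‖ + m := by
  have hshift : ∀ j n, g (j * m + n) = c ^ j * g n := by
    intro j
    induction j with
    | zero => simp
    | succ j ih =>
        intro n
        have : (j + 1) * m + n = j * m + (n + m) := by ring
        rw [this, ih, hper, pow_succ]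
        ring
  have hblock : ∀ q, ∑ n ∈ Finset.Ioc (q * m) (q * m + m), g n
      = c ^ q * ∑ n ∈ Finset.Ioc 0 m, g n := by
    intro q
    rw [show Finset.Ioc (q * m) (q * m + m) = Finset.map (addLeftEmbedding (q * m))
          (Finset.Ioc 0 m) by rw [Finset.map_add_left_Ioc]; simp,
        Finset.sum_map, Finset.mul_sum]
    exact Finset.sum_congr rfl fun n _ => by simpa using hshift q n
  have hfull : ∀ q, ∑ n ∈ Finset.Ioc 0 (q * m), g n
      = (∑ j ∈ Finset.range q, c ^ j) * ∑ n ∈ Finset.Ioc 0 m, g n := by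
    intro q
    induction q with
    | zero => simp
    | succ q ih =>
        rw [← Finset.sum_Ioc_consecutive g (Nat.zero_le (q * m))
            (by nlinarith : q * m ≤ (q + 1) * m),
          ih, show (q + 1) * m = q * m + m by ring, hblock, Finset.sum_range_succ, add_mul]
  set q := N / m with hq
  have hqm : q * m ≤ N := Nat.div_mul_le_self N m
  have hNq : N < q * m + m := Nat.lt_div_mul_add hm
  rw [Icc_one_eq_Ioc, ← Finset.sum_Ioc_consecutive g (Nat.zero_le (q * m)) hqm, hfull]
  calc ‖_ + _‖ ≤ ‖(∑ j ∈ Finset.range q, c ^ j) * ∑ n ∈ Finset.Ioc 0 m, g n‖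
        + ‖∑ n ∈ Finset.Ioc (q * m) N, g n‖ := norm_add_le _ _
  _ ≤ 2 / ‖1 - c‖ * m + m := by
      apply add_le_add
      · rw [norm_mul]
        apply mul_le_mul (geom_range_bound hc.le hc1 q) ?_ (norm_nonneg _)
          (by positivity)
        simpa using norm_sum_le_card g hg (Finset.Ioc 0 m)
      · calc ‖∑ n ∈ Finset.Ioc (q * m) N, g n‖ ≤ (Finset.Ioc (q * m) N).card :=
              norm_sum_le_card g hg _
        _ ≤ m := by
            rw [Nat.card_Ioc]
            push_cast
            have : N - q * m ≤ m := by omega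
            exact_mod_cast this
  _ = 2 * m / ‖1 - c‖ + m := by ring

private lemma conj_of_norm_one {u : ℂ} (hu : ‖u‖ = 1) : (starRingEnd ℂ) u = u⁻¹ := by
  have h1 : Complex.normSq u = 1 := by
    rw [Complex.normSq_eq_norm_sq, hu, one_pow]
  refine eq_inv_of_mul_eq_one_left ?_
  rw [mul_comm, Complex.mul_conj, h1, Complex.ofReal_one]

private lemma corr {u v : ℂ} (hu : ‖u‖ = 1) (hv : ‖v‖ = 1) (a b : ℤ) :
    (u ^ a * v ^ a ^ 2) * (starRingEnd ℂ) (u ^ b * v ^ b ^ 2)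
      = u ^ (a - b) * v ^ (a ^ 2 - b ^ 2) := by
  have hu0 : u ≠ 0 := by intro e; rw [e] at hu; simp at hu
  have hv0 : v ≠ 0 := by intro e; rw [e] at hv; simp at hv
  rw [map_mul, map_zpow₀, map_zpow₀, conj_of_norm_one hu, conj_of_norm_one hv,
    zpow_sub₀ hu0, zpow_sub₀ hv0, inv_zpow, inv_zpow]
  field_simp

private lemma term_eq {u v : ℂ} (hu : ‖u‖ = 1) (hv : ‖v‖ = 1) (h h' n : ℕ) :
    (u ^ (n + h) * v ^ (n + h) ^ 2) * (starRingEnd ℂ) (u ^ (n + h') * v ^ (n + h') ^ 2)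
      = (u ^ ((h : ℤ) - h') * v ^ (((h : ℤ) - h') * ((h : ℤ) + h')))
        * (v ^ (2 * ((h : ℤ) - h'))) ^ n := by
  have hv0 : v ≠ 0 := by intro e; rw [e] at hv; simp at hv
  have cast1 : ∀ (w : ℂ) (k : ℕ), w ^ k = w ^ (k : ℤ) := fun w k => (zpow_natCast w k).symm
  rw [cast1 u (n + h), cast1 v ((n + h) ^ 2), cast1 u (n + h'), cast1 v ((n + h') ^ 2)]
  push_cast
  rw [corr hu hv ((n : ℤ) + h) ((n : ℤ) + h'),
    show (n : ℤ) + h - ((n : ℤ) + h') = (h : ℤ) - h' by ring,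
    show ((n : ℤ) + h) ^ 2 - ((n : ℤ) + h') ^ 2
      = ((h : ℤ) - h') * ((h : ℤ) + h') + (2 * ((h : ℤ) - h')) * n by ring,
    zpow_add₀ hv0, ← zpow_natCast (v ^ (2 * ((h : ℤ) - h'))) n, ← zpow_mul, ← mul_assoc]

private lemma corr_sum {u v : ℂ} (hu : ‖u‖ = 1) (hv : ‖v‖ = 1)
    (hv2 : ∀ k : ℤ, k ≠ 0 → v ^ k ≠ 1) (N h h' : ℕ) (hne : h ≠ h') :
    ‖∑ n ∈ Finset.Icc 1 N,
        (u ^ (n + h) * v ^ (n + h) ^ 2) * (starRingEnd ℂ) (u ^ (n + h') * v ^ (n + h') ^ 2)‖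
      ≤ 2 / ‖1 - v ^ (2 * ((h : ℤ) - h'))‖ := by
  have hd : (2 : ℤ) * ((h : ℤ) - h') ≠ 0 := by omega
  have hw : ‖v ^ (2 * ((h : ℤ) - h'))‖ = 1 := by rw [norm_zpow, hv, one_zpow]
  have hw1 : v ^ (2 * ((h : ℤ) - h')) ≠ 1 := hv2 _ hd
  calc ‖∑ n ∈ Finset.Icc 1 N, _‖
      = ‖(u ^ ((h : ℤ) - h') * v ^ (((h : ℤ) - h') * ((h : ℤ) + h')))
          * ∑ n ∈ Finset.Icc 1 N, (v ^ (2 * ((h : ℤ) - h'))) ^ n‖ := by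
        rw [Finset.mul_sum]
        exact congrArg _ (Finset.sum_congr rfl fun n _ => term_eq hu hv h h' n)
  _ = ‖∑ n ∈ Finset.Icc 1 N, (v ^ (2 * ((h : ℤ) - h'))) ^ n‖ := by
        rw [norm_mul, norm_mul, norm_zpow, norm_zpow, hu, hv, one_zpow, one_zpow, one_mul,
          one_mul]
  _ ≤ 2 / ‖1 - v ^ (2 * ((h : ℤ) - h'))‖ := geom_Icc_bound hw hw1 N

private lemma central {u v : ℂ} (hu : ‖u‖ = 1) (hv : ‖v‖ = 1)
    (hv2 : ∀ k : ℤ, k ≠ 0 → v ^ k ≠ 1) (H N : ℕ) (hH : 1 ≤ H) :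
    ‖∑ n ∈ Finset.Icc 1 N, u ^ n * v ^ n ^ 2‖ ≤
      Real.sqrt (N * (H * N + ∑ h ∈ Finset.Icc 1 H, ∑ h' ∈ Finset.Icc 1 H,
        if h = h' then (0:ℝ) else 2 / ‖1 - v ^ (2 * ((h : ℤ) - h'))‖)) / H + 2 * H := by
  set F : ℕ → ℂ := fun n => u ^ n * v ^ n ^ 2 with hF
  have hFnorm : ∀ n, ‖F n‖ = 1 := by
    intro n; rw [hF]; simp only [norm_mul, norm_pow, hu, hv, one_pow, one_mul]
  set C : ℝ := ∑ h ∈ Finset.Icc 1 H, ∑ h' ∈ Finset.Icc 1 H,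
      if h = h' then (0:ℝ) else 2 / ‖1 - v ^ (2 * ((h : ℤ) - h'))‖ with hCdef
  have hC0 : 0 ≤ C := by
    rw [hCdef]
    apply Finset.sum_nonneg; intro h _
    apply Finset.sum_nonneg; intro h' _
    split <;> positivity
  set A : ℕ → ℂ := fun n => ∑ h ∈ Finset.Icc 1 H, F (n + h) with hA
  set S : ℂ := ∑ n ∈ Finset.Icc 1 N, F n with hS
  set T : ℂ := ∑ n ∈ Finset.Icc 1 N, A n with hT
  have hHpos : (0:ℝ) < H := by exact_mod_cast hH
  -- Step A
  have hTS : ‖T - (H : ℂ) * S‖ ≤ 2 * H * H := by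
    have hT' : T = ∑ h ∈ Finset.Icc 1 H, ∑ n ∈ Finset.Icc 1 N, F (n + h) := by
      rw [hT, hA]; exact Finset.sum_comm
    have hS' : (H : ℂ) * S = ∑ _h ∈ Finset.Icc 1 H, S := by
      rw [Finset.sum_const, Nat.card_Icc, nsmul_eq_mul]
      norm_num
    rw [hT', hS', ← Finset.sum_sub_distrib]
    calc ‖∑ h ∈ Finset.Icc 1 H, (∑ n ∈ Finset.Icc 1 N, F (n + h) - S)‖
        ≤ ∑ h ∈ Finset.Icc 1 H, ‖∑ n ∈ Finset.Icc 1 N, F (n + h) - S‖ := norm_sum_le _ _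
    _ ≤ ∑ _h ∈ Finset.Icc 1 H, (2 * H : ℝ) := by
        apply Finset.sum_le_sum
        intro h hh
        have h1 : ‖∑ n ∈ Finset.Icc 1 N, F (n + h) - S‖ ≤ 2 * h := by
          rw [hS]; exact shift_diff F (fun n => (hFnorm n).le) N h
        have h2 : (h : ℝ) ≤ H := by exact_mod_cast (Finset.mem_Icc.mp hh).2
        nlinarith
    _ = 2 * H * H := by
        rw [Finset.sum_const, Nat.card_Icc, nsmul_eq_mul]
        push_cast
        ring
  -- Step B : Cauchy-Schwarz
  have hCS : ‖T‖ ^ 2 ≤ N * ∑ n ∈ Finset.Icc 1 N, ‖A n‖ ^ 2 := by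
    have h1 : ‖T‖ ≤ ∑ n ∈ Finset.Icc 1 N, ‖A n‖ := norm_sum_le _ _
    have h2 : (∑ n ∈ Finset.Icc 1 N, ‖A n‖) ^ 2
        ≤ (∑ _n ∈ Finset.Icc 1 N, (1:ℝ)) * ∑ n ∈ Finset.Icc 1 N, ‖A n‖ ^ 2 := by
      have := Finset.sum_mul_sq_le_sq_mul_sq (Finset.Icc 1 N) (fun _ => (1:ℝ))
        (fun n => ‖A n‖)
      simpa using this
    have h3 : (∑ _n ∈ Finset.Icc 1 N, (1:ℝ)) = N := by
      rw [Finset.sum_const, Nat.card_Icc, nsmul_eq_mul]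
      push_cast; ring
    calc ‖T‖ ^ 2 ≤ (∑ n ∈ Finset.Icc 1 N, ‖A n‖) ^ 2 :=
          pow_le_pow_left₀ (norm_nonneg _) h1 2
    _ ≤ (∑ _n ∈ Finset.Icc 1 N, (1:ℝ)) * ∑ n ∈ Finset.Icc 1 N, ‖A n‖ ^ 2 := h2
    _ = N * ∑ n ∈ Finset.Icc 1 N, ‖A n‖ ^ 2 := by rw [h3]
  -- Step C : expansion
  have hCC : ∑ n ∈ Finset.Icc 1 N, ‖A n‖ ^ 2 ≤ H * N + C := by
    have hAn : ∀ n, (‖A n‖:ℝ) ^ 2 = (A n * (starRingEnd ℂ) (A n)).re := by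
      intro n
      rw [Complex.mul_conj, Complex.ofReal_re, ← Complex.sq_norm]
    have hexp : ∀ n, A n * (starRingEnd ℂ) (A n)
        = ∑ h ∈ Finset.Icc 1 H, ∑ h' ∈ Finset.Icc 1 H, F (n + h) * (starRingEnd ℂ) (F (n + h')) := by
      intro n
      rw [hA, map_sum, Finset.sum_mul_sum]
    have hswap : ∑ n ∈ Finset.Icc 1 N, (A n * (starRingEnd ℂ) (A n))
        = ∑ h ∈ Finset.Icc 1 H, ∑ h' ∈ Finset.Icc 1 H,
            ∑ n ∈ Finset.Icc 1 N, F (n + h) * (starRingEnd ℂ) (F (n + h')) := by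
      simp_rw [hexp]
      rw [Finset.sum_comm]
      exact Finset.sum_congr rfl fun h _ => Finset.sum_comm
    calc ∑ n ∈ Finset.Icc 1 N, ‖A n‖ ^ 2
        = (∑ n ∈ Finset.Icc 1 N, (A n * (starRingEnd ℂ) (A n))).re := by
          rw [Complex.re_sum]
          exact Finset.sum_congr rfl fun n _ => hAn n
    _ = (∑ h ∈ Finset.Icc 1 H, ∑ h' ∈ Finset.Icc 1 H,
            ∑ n ∈ Finset.Icc 1 N, F (n + h) * (starRingEnd ℂ) (F (n + h'))).re := by
          rw [hswap]
    _ ≤ ‖∑ h ∈ Finset.Icc 1 H, ∑ h' ∈ Finset.Icc 1 H,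
            ∑ n ∈ Finset.Icc 1 N, F (n + h) * (starRingEnd ℂ) (F (n + h'))‖ := by
          exact Complex.re_le_norm _
    _ ≤ ∑ h ∈ Finset.Icc 1 H, ∑ h' ∈ Finset.Icc 1 H,
            ‖∑ n ∈ Finset.Icc 1 N, F (n + h) * (starRingEnd ℂ) (F (n + h'))‖ :=
          (norm_sum_le _ _).trans (Finset.sum_le_sum fun h _ => norm_sum_le _ _)
    _ ≤ ∑ h ∈ Finset.Icc 1 H, ∑ h' ∈ Finset.Icc 1 H,
            (if h = h' then (N:ℝ) else 2 / ‖1 - v ^ (2 * ((h : ℤ) - h'))‖) := by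
          apply Finset.sum_le_sum; intro h _
          apply Finset.sum_le_sum; intro h' _
          by_cases hhh : h = h'
          · subst hhh
            simp only [if_pos rfl]
            have hdiag : ∀ n : ℕ, F (n + h) * (starRingEnd ℂ) (F (n + h)) = 1 := by
              intro n
              rw [Complex.mul_conj]
              have := hFnorm (n + h)
              rw [Complex.normSq_eq_norm_sq, this]
              norm_num
            rw [Finset.sum_congr rfl fun n _ => hdiag n, Finset.sum_const, Nat.card_Icc,
              nsmul_eq_mul, mul_one]
            push_cast
            simp
          · simp only [if_neg hhh]
            exact corr_sum hu hv hv2 N h h' hhh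
    _ = H * N + C := by
          have hsplit : ∀ h h' : ℕ, (if h = h' then (N:ℝ)
                else 2 / ‖1 - v ^ (2 * ((h : ℤ) - h'))‖)
              = (if h = h' then (N:ℝ) else 0)
                + (if h = h' then (0:ℝ) else 2 / ‖1 - v ^ (2 * ((h : ℤ) - h'))‖) := by
            intro h h'; by_cases hhh : h = h' <;> simp [hhh]
          simp_rw [hsplit, Finset.sum_add_distrib]
          congr 1
          rw [Finset.sum_congr rfl fun h hh => Finset.sum_ite_eq (Finset.Icc 1 H) h
            (fun _ => (N:ℝ)), Finset.sum_congr rfl fun h hh => if_pos hh,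
            Finset.sum_const, Nat.card_Icc, nsmul_eq_mul]
          push_cast; ring
  -- Put everything together
  have hy0 : (0:ℝ) ≤ (N:ℝ) * ((H:ℝ) * N + C) :=
    mul_nonneg (Nat.cast_nonneg N) (add_nonneg (by positivity) hC0)
  have hT2 : ‖T‖ ≤ Real.sqrt (N * (H * N + C)) := by
    rw [Real.le_sqrt (norm_nonneg _) hy0]
    calc ‖T‖ ^ 2 ≤ N * ∑ n ∈ Finset.Icc 1 N, ‖A n‖ ^ 2 := hCS
    _ ≤ N * (H * N + C) := mul_le_mul_of_nonneg_left hCC (Nat.cast_nonneg N)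
  have hfin : (H:ℝ) * ‖S‖ ≤ Real.sqrt (N * (H * N + C)) + 2 * H * H := by
    calc (H:ℝ) * ‖S‖ = ‖(H : ℂ) * S‖ := by
          rw [norm_mul, Complex.norm_natCast]
    _ = ‖T - (T - (H:ℂ) * S)‖ := by ring_nf
    _ ≤ ‖T‖ + ‖T - (H:ℂ) * S‖ := norm_sub_le _ _
    _ ≤ Real.sqrt (N * (H * N + C)) + 2 * H * H := add_le_add hT2 hTS
  rw [show Real.sqrt (N * (H * N + C)) / H + 2 * H
      = (Real.sqrt (N * (H * N + C)) + 2 * H * H) / H by field_simp]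
  rw [le_div_iff₀ hHpos]
  linarith [hfin]

private lemma case2 {u v : ℂ} (hu : ‖u‖ = 1) (hv : ‖v‖ = 1)
    (hv2 : ∀ k : ℤ, k ≠ 0 → v ^ k ≠ 1) :
    Filter.Tendsto (fun N : ℕ => (N : ℂ)⁻¹ * ∑ n ∈ Finset.Icc 1 N, u ^ n * v ^ n ^ 2)
      Filter.atTop (nhds 0) := by
  rw [NormedAddCommGroup.tendsto_nhds_zero]
  intro ε hε
  obtain ⟨H, hH1, hH8⟩ : ∃ H : ℕ, 1 ≤ H ∧ (8:ℝ) / ε ^ 2 ≤ H := by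
    refine ⟨max 1 ⌈(8:ℝ) / ε ^ 2⌉₊, le_max_left _ _, ?_⟩
    calc (8:ℝ) / ε ^ 2 ≤ ⌈(8:ℝ) / ε ^ 2⌉₊ := Nat.le_ceil _
    _ ≤ (max 1 ⌈(8:ℝ) / ε ^ 2⌉₊ : ℕ) := by exact_mod_cast le_max_right _ _
  set C : ℝ := ∑ h ∈ Finset.Icc 1 H, ∑ h' ∈ Finset.Icc 1 H,
      if h = h' then (0:ℝ) else 2 / ‖1 - v ^ (2 * ((h : ℤ) - h'))‖ with hCdef
  have hC0 : 0 ≤ C := by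
    rw [hCdef]
    apply Finset.sum_nonneg; intro h _
    apply Finset.sum_nonneg; intro h' _
    split <;> positivity
  have hHpos : (0:ℝ) < H := by exact_mod_cast hH1
  filter_upwards [Filter.eventually_ge_atTop 1,
    Filter.eventually_gt_atTop ⌈C / H⌉₊,
    Filter.eventually_gt_atTop ⌈4 * H / ε⌉₊] with N hN1 hNC hNε
  have hNpos : (0:ℝ) < N := by exact_mod_cast hN1
  -- C < N * H
  have hCN : C < N * H := by
    have h1 : C / H ≤ ⌈C / H⌉₊ := Nat.le_ceil _
    have h2 : (⌈C / H⌉₊ : ℝ) < N := by exact_mod_cast hNC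
    have : C / H < N := lt_of_le_of_lt h1 h2
    calc C = C / H * H := by field_simp
    _ < N * H := by exact mul_lt_mul_of_pos_right this hHpos
  -- 4H < εN
  have hεN : 4 * H < ε * N := by
    have h1 : 4 * H / ε ≤ ⌈4 * H / ε⌉₊ := Nat.le_ceil _
    have h2 : (⌈4 * H / ε⌉₊ : ℝ) < N := by exact_mod_cast hNε
    have h3 : 4 * H / ε < N := lt_of_le_of_lt h1 h2
    calc 4 * (H:ℝ) = 4 * H / ε * ε := by field_simp
    _ < N * ε := mul_lt_mul_of_pos_right h3 hε
    _ = ε * N := by ring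
  -- sqrt bound
  have hsq : Real.sqrt (N * (H * N + C)) < ε / 2 * (H * N) := by
    rw [Real.sqrt_lt' (by positivity)]
    have e1 : (N:ℝ) * (H * N + C) < 2 * H * N ^ 2 := by nlinarith
    have e2 : (2:ℝ) * H * N ^ 2 ≤ (ε / 2 * (H * N)) ^ 2 := by
      have h8 : (8:ℝ) ≤ ε ^ 2 * H := by
        rw [div_le_iff₀ (by positivity)] at hH8
        linarith
      nlinarith [sq_nonneg ((H:ℝ) * N), hHpos, hNpos]
    linarith
  have hcent := central hu hv hv2 H N hH1
  rw [← hCdef] at hcent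
  have hSb : ‖∑ n ∈ Finset.Icc 1 N, u ^ n * v ^ n ^ 2‖ < ε / 2 * N + 2 * H := by
    calc ‖∑ n ∈ Finset.Icc 1 N, u ^ n * v ^ n ^ 2‖
        ≤ Real.sqrt (N * (H * N + C)) / H + 2 * H := hcent
    _ < ε / 2 * (H * N) / H + 2 * H := by
        apply add_lt_add_left
        exact div_lt_div_of_pos_right hsq hHpos
    _ = ε / 2 * N + 2 * H := by field_simp
  rw [norm_mul, norm_inv, Complex.norm_natCast, inv_mul_eq_div, div_lt_iff₀ hNpos]
  calc ‖∑ n ∈ Finset.Icc 1 N, u ^ n * v ^ n ^ 2‖ < ε / 2 * N + 2 * H := hSb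
  _ < ε / 2 * N + ε / 2 * N := by nlinarith
  _ = ε * N := by ring

private lemma case1 {u v : ℂ} (hu : ‖u‖ = 1) (hv : ‖v‖ = 1)
    (hu2 : ∀ m : ℕ, 0 < m → u ^ m ≠ 1) (m : ℕ) (hm : 0 < m) (hvm : v ^ m = 1) :
    Filter.Tendsto (fun N : ℕ => (N : ℂ)⁻¹ * ∑ n ∈ Finset.Icc 1 N, u ^ n * v ^ n ^ 2)
      Filter.atTop (nhds 0) := by
  set g : ℕ → ℂ := fun n => u ^ n * v ^ n ^ 2 with hg
  have hgnorm : ∀ n, ‖g n‖ ≤ 1 := by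
    intro n; rw [hg]
    simp only [norm_mul, norm_pow, hu, hv, one_pow, one_mul, le_refl]
  have hper : ∀ n, g (n + m) = u ^ m * g n := by
    intro n
    rw [hg]
    simp only
    rw [pow_add, show (n + m) ^ 2 = n ^ 2 + m * (2 * n + m) by ring, pow_add,
      pow_mul, hvm, one_pow, mul_one]
    ring
  have hcm : ‖u ^ m‖ = 1 := by rw [norm_pow, hu, one_pow]
  have hbound := quasiperiodic_bounded g m hm (u ^ m) hcm (hu2 m hm) hgnorm hper
  apply squeeze_zero_norm (a := fun N : ℕ => (2 * m / ‖1 - u ^ m‖ + m) / N)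
  · intro N
    rw [norm_mul, norm_inv, Complex.norm_natCast, inv_mul_eq_div]
    rcases Nat.eq_zero_or_pos N with h0 | hpos
    · subst h0; simp
    · exact div_le_div_of_nonneg_right (hbound N) (Nat.cast_nonneg N)
  · exact tendsto_const_div_atTop_nhds_zero_nat _

open MeasureTheory

/-- Weyl-type estimate: if `χ` is a continuous character of a compact abelian group `Z` and
`χ(α)`, `χ(β)` are not both roots of unity, then `(1/N) ∑_{n=1}^N χ(nα + n²β) → 0`. -/
theorem stmt6 {Z : Type*} [AddCommGroup Z] [TopologicalSpace Z] [IsTopologicalAddGroup Z]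
    [CompactSpace Z] (α β : Z) (χ : AddChar Z Circle) (hχ : Continuous χ)
    (h : ¬ ((∃ m : ℕ, 0 < m ∧ χ α ^ m = 1) ∧ (∃ m : ℕ, 0 < m ∧ χ β ^ m = 1))) :
    Filter.Tendsto
      (fun N : ℕ => (N : ℂ)⁻¹ * ∑ n ∈ Finset.Icc 1 N, ((χ (n • α + n ^ 2 • β) : Circle) : ℂ))
      Filter.atTop (nhds 0) := by
  have cpow : ∀ (x : Circle) (k : ℕ), ((x ^ k : Circle) : ℂ) = (x : ℂ) ^ k := by
    intro x k
    induction k with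
    | zero => simp
    | succ k ih => rw [pow_succ, pow_succ, Circle.coe_mul, ih]
  set u : ℂ := (χ α : ℂ) with hud
  set v : ℂ := (χ β : ℂ) with hvd
  have hu : ‖u‖ = 1 := by rw [hud, Circle.norm_coe]
  have hv : ‖v‖ = 1 := by rw [hvd, Circle.norm_coe]
  have hrw : (fun N : ℕ => (N : ℂ)⁻¹ *
        ∑ n ∈ Finset.Icc 1 N, ((χ (n • α + n ^ 2 • β) : Circle) : ℂ))
      = fun N : ℕ => (N : ℂ)⁻¹ * ∑ n ∈ Finset.Icc 1 N, u ^ n * v ^ n ^ 2 := by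
    funext N
    congr 1
    apply Finset.sum_congr rfl
    intro n _
    rw [AddChar.map_add_eq_mul, AddChar.map_nsmul_eq_pow, AddChar.map_nsmul_eq_pow,
      Circle.coe_mul, cpow, cpow]
  rw [hrw]
  by_cases hvB : ∃ m : ℕ, 0 < m ∧ χ β ^ m = 1
  · obtain ⟨m, hm, hvm⟩ := hvB
    have hA : ¬ ∃ m : ℕ, 0 < m ∧ χ α ^ m = 1 := fun hA => h ⟨hA, ⟨m, hm, hvm⟩⟩
    push_neg at hA
    have hu2 : ∀ k : ℕ, 0 < k → u ^ k ≠ 1 := fun k hk he =>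
      hA k hk (Circle.coe_injective (by rw [cpow, Circle.coe_one]; exact he))
    have hvm' : v ^ m = 1 := by rw [hvd, ← cpow, hvm, Circle.coe_one]
    exact case1 hu hv hu2 m hm hvm'
  · push_neg at hvB
    have hnat : ∀ j : ℕ, 0 < j → v ^ j ≠ 1 := fun j hj hej =>
      hvB j hj (Circle.coe_injective (by rw [cpow, Circle.coe_one]; exact hej))
    have hv2 : ∀ k : ℤ, k ≠ 0 → v ^ k ≠ 1 := by
      intro k hk he
      rcases lt_trichotomy k 0 with hneg | h0 | hpos
      · have hinv : v ^ (-k) = 1 := by rw [zpow_neg, he, inv_one]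
        obtain ⟨j, hj⟩ : ∃ j : ℕ, -k = (j : ℤ) := ⟨(-k).toNat, by omega⟩
        rw [hj, zpow_natCast] at hinv
        exact hnat j (by omega) hinv
      · exact hk h0
      · obtain ⟨j, hj⟩ : ∃ j : ℕ, k = (j : ℤ) := ⟨k.toNat, by omega⟩
        rw [hj, zpow_natCast] at he
        exact hnat j (by omega) he
    exact case2 hu hv hv2
end

section
/- Let Z be a connected compact abelian group with Haar probability measure m, and let α, β ∈ Z be such that each of α and β generates a dense subgroup of Z. Then for every continuous f : Z → ℂ, lim_{N→∞} (1/N) ∑_{n=1}^N f(nα + n²β) = ∫ f dm. -/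
set_option maxHeartbeats 1000000


open MeasureTheory Filter Finset

section auxiliary

variable {Z : Type*} [AddCommGroup Z] [TopologicalSpace Z] [IsTopologicalAddGroup Z]
    [CompactSpace Z] [T2Space Z]

/-- Uniform-continuity style lemma on a compact group. -/
lemma aux_unifSmall (φ : Z → ℂ) (hφ : Continuous φ) {ε : ℝ} (hε : 0 < ε) :
    ∃ U : Set Z, IsOpen U ∧ (0 : Z) ∈ U ∧ ∀ t ∈ U, ∀ z, ‖φ (z + t) - φ z‖ ≤ ε := by
  set K : Set (Z × Z) := {p : Z × Z | ε ≤ ‖φ (p.2 + p.1) - φ p.2‖} with hK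
  have hcont : Continuous fun p : Z × Z => ‖φ (p.2 + p.1) - φ p.2‖ :=
    ((hφ.comp (continuous_snd.add continuous_fst)).sub (hφ.comp continuous_snd)).norm
  have hKc : IsClosed K := isClosed_le continuous_const hcont
  have hKcomp : IsCompact K := hKc.isCompact
  have hPcomp : IsCompact (Prod.fst '' K) := hKcomp.image continuous_fst
  have hPc : IsClosed (Prod.fst '' K) := hPcomp.isClosed
  have h0 : (0 : Z) ∉ Prod.fst '' K := by
    rintro ⟨⟨t, z⟩, hmem, h0⟩
    simp only [hK, Set.mem_setOf_eq] at hmem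
    rw [show t = (0 : Z) from h0] at hmem
    simp only [add_zero, sub_self, norm_zero] at hmem
    linarith
  refine ⟨(Prod.fst '' K)ᶜ, hPc.isOpen_compl, h0, fun t ht z => ?_⟩
  by_contra hlt
  exact ht ⟨(t, z), le_of_not_ge hlt, rfl⟩

/-- Shifted-window sum comparison over `ℤ`. -/
lemma aux_sum_window (g : ℤ → ℂ) {C : ℝ} (hg : ∀ i, ‖g i‖ ≤ C) (a N : ℤ) :
    ‖(∑ i ∈ Icc (a + 1) (a + N), g i) - ∑ i ∈ Icc 1 N, g i‖ ≤ 2 * (a.natAbs : ℝ) * C := by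
  have hC : 0 ≤ C := le_trans (norm_nonneg _) (hg 0)
  set S := Icc (a + 1) (a + N) with hS
  set T := Icc (1 : ℤ) N with hT
  have key : (∑ i ∈ S, g i) - ∑ i ∈ T, g i = (∑ i ∈ S \ T, g i) - ∑ i ∈ T \ S, g i :=
    (Finset.sum_sdiff_sub_sum_sdiff).symm
  have hcard1 : ((S \ T).card : ℝ) ≤ (a.natAbs : ℝ) := by
    have hsub : S \ T ⊆ Icc (a + 1) 0 ∪ Icc (N + 1) (a + N) := by
      intro i hi
      simp only [hS, hT, Finset.mem_sdiff, Finset.mem_Icc, Finset.mem_union] at *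
      omega
    have h1 := Finset.card_le_card hsub
    have h2 := Finset.card_union_le (Icc (a + 1) (0 : ℤ)) (Icc (N + 1) (a + N))
    rw [Int.card_Icc, Int.card_Icc] at h2
    exact_mod_cast le_trans (Nat.cast_le.mpr (le_trans h1 h2)) (by push_cast; omega)
  have hcard2 : ((T \ S).card : ℝ) ≤ (a.natAbs : ℝ) := by
    have hsub : T \ S ⊆ Icc 1 a ∪ Icc (a + N + 1) N := by
      intro i hi
      simp only [hS, hT, Finset.mem_sdiff, Finset.mem_Icc, Finset.mem_union] at *
      omega
    have h1 := Finset.card_le_card hsub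
    have h2 := Finset.card_union_le (Icc (1 : ℤ) a) (Icc (a + N + 1) N)
    rw [Int.card_Icc, Int.card_Icc] at h2
    exact_mod_cast le_trans (Nat.cast_le.mpr (le_trans h1 h2)) (by push_cast; omega)
  rw [key]
  have b1 : ‖∑ i ∈ S \ T, g i‖ ≤ ((S \ T).card : ℝ) * C := by
    calc ‖∑ i ∈ S \ T, g i‖ ≤ ∑ i ∈ S \ T, ‖g i‖ := norm_sum_le _ _
    _ ≤ ((S \ T).card : ℝ) * C := by
        simpa [nsmul_eq_mul] using Finset.sum_le_card_nsmul (S \ T) (fun i => ‖g i‖) C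
          (fun i _ => hg i)
  have b2 : ‖∑ i ∈ T \ S, g i‖ ≤ ((T \ S).card : ℝ) * C := by
    calc ‖∑ i ∈ T \ S, g i‖ ≤ ∑ i ∈ T \ S, ‖g i‖ := norm_sum_le _ _
    _ ≤ ((T \ S).card : ℝ) * C := by
        simpa [nsmul_eq_mul] using Finset.sum_le_card_nsmul (T \ S) (fun i => ‖g i‖) C
          (fun i _ => hg i)
  calc ‖(∑ i ∈ S \ T, g i) - ∑ i ∈ T \ S, g i‖
      ≤ ‖∑ i ∈ S \ T, g i‖ + ‖∑ i ∈ T \ S, g i‖ := norm_sub_le _ _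
  _ ≤ ((S \ T).card : ℝ) * C + ((T \ S).card : ℝ) * C := add_le_add b1 b2
  _ ≤ (a.natAbs : ℝ) * C + (a.natAbs : ℝ) * C := by gcongr
  _ = 2 * (a.natAbs : ℝ) * C := by ring

/-- Convert a `ℕ`-indexed interval sum to a `ℤ`-indexed one. -/
lemma aux_natInt (g : ℤ → ℂ) (N : ℕ) :
    ∑ n ∈ Icc (1 : ℕ) N, g (n : ℤ) = ∑ i ∈ Icc (1 : ℤ) (N : ℤ), g i := by
  refine Finset.sum_nbij' (fun n => (n : ℤ)) (fun i => i.toNat) ?_ ?_ ?_ ?_ ?_ <;>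
    intros a ha <;> simp only [Finset.mem_Icc] at * <;> omega

/-- Average of uniformly bounded terms is bounded. -/
lemma aux_avgC (v : ℕ → ℂ) {C : ℝ} (hC0 : 0 ≤ C) (hv : ∀ n, ‖v n‖ ≤ C) (N : ℕ) :
    ‖(N : ℂ)⁻¹ * ∑ n ∈ Icc 1 N, v n‖ ≤ C := by
  rw [norm_mul, norm_inv, Complex.norm_natCast]
  rcases Nat.eq_zero_or_pos N with h0 | hpos
  · subst h0; simpa using hC0
  · have hsum : ‖∑ n ∈ Icc 1 N, v n‖ ≤ (N : ℝ) * C := by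
      refine le_trans (norm_sum_le _ _) ?_
      have := Finset.sum_le_card_nsmul (Icc 1 N) (fun n => ‖v n‖) C (fun i _ => hv _)
      rwa [Nat.card_Icc, Nat.add_sub_cancel, nsmul_eq_mul] at this
    calc (N : ℝ)⁻¹ * ‖∑ n ∈ Icc 1 N, v n‖ ≤ (N : ℝ)⁻¹ * ((N : ℝ) * C) := by gcongr
    _ = C := by field_simp

/-- Comparison of an average with the average of a shifted window, `ℕ` version. -/
lemma aux_winNat (u : ℕ → ℂ) {C : ℝ} (hu : ∀ k, ‖u k‖ ≤ C) (i N : ℕ) :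
    ‖(N : ℂ)⁻¹ * ∑ n ∈ Icc 1 N, u (n + i) - (N : ℂ)⁻¹ * ∑ n ∈ Icc 1 N, u n‖
      ≤ (N : ℝ)⁻¹ * (2 * (i : ℝ) * C) := by
  set q : ℤ → ℂ := fun j => u j.toNat with hq
  have h1 : ∑ n ∈ Icc 1 N, u (n + i) = ∑ jj ∈ Icc ((i : ℤ) + 1) ((i : ℤ) + N), q jj := by
    rw [← Finset.map_add_left_Icc, Finset.sum_map]
    simp only [addLeftEmbedding_apply]
    rw [← aux_natInt (fun j => q ((i : ℤ) + j)) N]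
    refine Finset.sum_congr rfl fun n _ => ?_
    simp only [hq]
    congr 1
    omega
  have h2 : ∑ n ∈ Icc 1 N, u n = ∑ j ∈ Icc (1 : ℤ) (N : ℤ), q j := by
    rw [← aux_natInt q N]
    refine Finset.sum_congr rfl fun n _ => ?_
    simp only [hq, Int.toNat_natCast]
  rw [h1, h2, ← mul_sub, norm_mul, norm_inv, Complex.norm_natCast]
  have := aux_sum_window q (fun j => hu _) (i : ℤ) (N : ℤ)
  simp only [Int.natAbs_natCast] at this
  exact mul_le_mul_of_nonneg_left this (inv_nonneg.mpr (Nat.cast_nonneg N))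

end auxiliary

section density

variable {Z : Type*} [AddCommGroup Z] [TopologicalSpace Z] [IsTopologicalAddGroup Z]
    [ConnectedSpace Z]

lemma aux_dense_zsmul_pos {β : Z} (hβ : Dense (Set.range fun n : ℤ => n • β))
    {k : ℤ} (hk : 0 < k) : Dense (Set.range fun n : ℤ => n • (k • β)) := by
  classical
  set H : AddSubgroup Z := (AddSubgroup.zmultiples (k • β)).topologicalClosure with hHdef
  have hHclosed : IsClosed (H : Set Z) := AddSubgroup.isClosed_topologicalClosure _
  set c : ℕ → Z := fun r => (r : ℤ) • β with hc
  set W : Set Z := ⋃ r ∈ Finset.range k.toNat, (fun z => c r + z) '' (H : Set Z) with hW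
  have covmem : ∀ n : ℤ, n • β ∈ W := by
    intro n
    have hk' : k ≠ 0 := ne_of_gt hk
    have hmod0 : 0 ≤ n % k := Int.emod_nonneg n hk'
    have hmodlt : n % k < k := Int.emod_lt_of_pos n hk
    have hmem : ((n % k).toNat) ∈ Finset.range k.toNat := by
      rw [Finset.mem_range]; omega
    refine Set.mem_biUnion hmem ⟨(n / k) • (k • β), ?_, ?_⟩
    · exact AddSubgroup.le_topologicalClosure _ (AddSubgroup.zsmul_mem_zmultiples _ _)
    · have h1 : ((n % k).toNat : ℤ) = n % k := Int.toNat_of_nonneg hmod0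
      rw [hc]
      dsimp only
      rw [h1, smul_smul, ← add_zsmul]
      congr 1
      linarith [Int.emod_add_ediv_mul n k, mul_comm (n / k) k]
  have hWclosed : IsClosed W := by
    refine Set.Finite.isClosed_biUnion (Finset.range k.toNat).finite_toSet fun r _ => ?_
    exact (Homeomorph.addLeft (c r)).isClosedMap _ hHclosed
  have hWuniv : W = Set.univ := by
    apply Set.eq_univ_of_univ_subset
    rw [← hβ.closure_eq]
    exact closure_minimal (by rintro x ⟨n, rfl⟩; exact covmem n) hWclosed
  have hcompl : (H : Set Z)ᶜ =
      ⋃ r ∈ (Finset.range k.toNat).filter (fun r => c r ∉ H),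
        (fun z => c r + z) '' (H : Set Z) := by
    ext z
    constructor
    · intro hz
      have hzW : z ∈ W := hWuniv ▸ Set.mem_univ z
      obtain ⟨r, hr, h, hh, rfl⟩ := by
        simpa only [hW, Set.mem_iUnion, Set.mem_image, exists_prop] using hzW
      refine Set.mem_biUnion (Finset.mem_filter.mpr ⟨hr, fun hcr => ?_⟩) ⟨h, hh, rfl⟩
      exact hz (H.add_mem hcr hh)
    · intro hzU
      obtain ⟨r, hr, h, hh, rfl⟩ := by
        simpa only [Set.mem_iUnion, Set.mem_image, exists_prop] using hzU
      have hcr : c r ∉ H := (Finset.mem_filter.mp hr).2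
      intro hzH
      exact hcr (by simpa using H.sub_mem hzH hh)
  have hHopen : IsOpen (H : Set Z) := by
    rw [← isClosed_compl_iff, hcompl]
    exact Set.Finite.isClosed_biUnion (Finset.finite_toSet _) fun r _ =>
      (Homeomorph.addLeft (c r)).isClosedMap _ hHclosed
  have hclopen : IsClopen (H : Set Z) := ⟨hHclosed, hHopen⟩
  have huniv : (H : Set Z) = Set.univ := by
    rcases isClopen_iff.mp hclopen with h | h
    · exact absurd (h ▸ H.zero_mem : (0 : Z) ∈ (∅ : Set Z)) (Set.notMem_empty _)
    · exact h
  have hrange : (Set.range fun n : ℤ => n • (k • β)) =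
      ((AddSubgroup.zmultiples (k • β) : AddSubgroup Z) : Set Z) := by
    ext x
    simp [AddSubgroup.mem_zmultiples_iff]
  rw [dense_iff_closure_eq, hrange]
  exact huniv

lemma aux_dense_zsmul {β : Z} (hβ : Dense (Set.range fun n : ℤ => n • β))
    {k : ℤ} (hk : k ≠ 0) : Dense (Set.range fun n : ℤ => n • (k • β)) := by
  rcases lt_or_gt_of_ne hk with hneg | hpos
  · have hr : (Set.range fun n : ℤ => n • (k • β)) =
        Set.range fun n : ℤ => n • ((-k) • β) := by
      ext x
      constructor <;> rintro ⟨n, rfl⟩ <;> refine ⟨-n, ?_⟩ <;> simp [smul_smul]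
    rw [hr]
    exact aux_dense_zsmul_pos hβ (by omega)
  · exact aux_dense_zsmul_pos hβ hpos

end density

section rotation

variable {Z : Type*} [AddCommGroup Z] [TopologicalSpace Z] [IsTopologicalAddGroup Z]
    [CompactSpace Z] [T2Space Z] [MeasurableSpace Z] [BorelSpace Z]

lemma aux_contIntegrable (m : Measure Z) [IsFiniteMeasure m] {ψ : Z → ℂ} (hψ : Continuous ψ) :
    Integrable ψ m :=
  hψ.integrable_of_hasCompactSupport (HasCompactSupport.of_compactSpace ψ)

/-- Unique ergodicity of rotation by a topological generator, pointwise form. -/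
lemma aux_lemA (m : Measure Z) [m.IsAddHaarMeasure] [IsProbabilityMeasure m]
    {γ : Z} (hγ : Dense (Set.range fun n : ℤ => n • γ)) {φ : Z → ℂ} (hφ : Continuous φ)
    (x : Z) :
    Tendsto (fun N : ℕ => (N : ℂ)⁻¹ * ∑ n ∈ Icc 1 N, φ (x + n • γ)) atTop
      (nhds (∫ z, φ z ∂m)) := by
  obtain ⟨C, hC⟩ := isCompact_univ.exists_bound_of_continuousOn hφ.continuousOn
  replace hC : ∀ z, ‖φ z‖ ≤ C := fun z => hC z (Set.mem_univ z)
  have hC0 : 0 ≤ C := le_trans (norm_nonneg _) (hC 0)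
  set A : Z → ℕ → ℂ := fun y N => (N : ℂ)⁻¹ * ∑ n ∈ Icc 1 N, φ (y + n • γ) with hA
  have hAz : ∀ y N, A y N = (N : ℂ)⁻¹ * ∑ i ∈ Icc (1 : ℤ) (N : ℤ), φ (y + i • γ) := by
    intro y N
    simp only [hA]
    congr 1
    rw [← aux_natInt (fun i => φ (y + i • γ)) N]
    exact Finset.sum_congr rfl fun n _ => by rw [natCast_zsmul]
  have hAcont : ∀ N, Continuous fun y => A y N := by
    intro N
    simp only [hA]
    exact continuous_const.mul
      (continuous_finset_sum _ fun n _ => hφ.comp (continuous_id.add continuous_const))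
  have hAbound : ∀ y N, ‖A y N‖ ≤ C := fun y N => aux_avgC _ hC0 (fun n => hC _) N
  have hInt : ∀ N, Integrable (fun y => A y N) m := fun N => aux_contIntegrable m (hAcont N)
  have hAint : ∀ N : ℕ, 1 ≤ N → ∫ y, A y N ∂m = ∫ z, φ z ∂m := by
    intro N hN
    simp only [hA]
    rw [integral_const_mul]
    rw [integral_finset_sum (Icc 1 N) (f := fun (n : ℕ) (y : Z) => φ (y + n • γ))
      (fun n _ => aux_contIntegrable m (hφ.comp (continuous_id.add continuous_const)))]
    have heach : ∀ n ∈ Icc 1 N, ∫ y, φ (y + n • γ) ∂m = ∫ z, φ z ∂m :=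
      fun n _ => integral_add_right_eq_self φ _
    rw [Finset.sum_congr rfl heach, Finset.sum_const, Nat.card_Icc, Nat.add_sub_cancel,
      nsmul_eq_mul, ← mul_assoc, inv_mul_cancel₀ (Nat.cast_ne_zero.mpr (by omega)), one_mul]
  have hdrift : ∀ (y : Z) (n₀ : ℤ) (N : ℕ),
      ‖A (y + n₀ • γ) N - A y N‖ ≤ (N : ℝ)⁻¹ * (2 * (n₀.natAbs : ℝ) * C) := by
    intro y n₀ N
    rw [hAz, hAz]
    set g : ℤ → ℂ := fun i => φ (y + i • γ) with hg
    have h2 : ∑ i ∈ Icc (1 : ℤ) (N : ℤ), φ ((y + n₀ • γ) + i • γ)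
        = ∑ i ∈ Icc (n₀ + 1) (n₀ + N), g i := by
      rw [← Finset.map_add_left_Icc, Finset.sum_map]
      refine Finset.sum_congr rfl fun i _ => ?_
      simp only [addLeftEmbedding_apply, hg]
      rw [add_zsmul, add_assoc]
    rw [h2, ← mul_sub, norm_mul, norm_inv, Complex.norm_natCast]
    exact mul_le_mul_of_nonneg_left (aux_sum_window g (fun i => hC _) n₀ N)
      (inv_nonneg.mpr (Nat.cast_nonneg N))
  have hdrift0 : ∀ n₀ : ℤ,
      Tendsto (fun N : ℕ => (N : ℝ)⁻¹ * (2 * (n₀.natAbs : ℝ) * C)) atTop (nhds 0) := by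
    intro n₀
    simpa using tendsto_inv_atTop_nhds_zero_nat.mul_const (2 * (n₀.natAbs : ℝ) * C)
  have hpair : ∀ x' y : Z, Tendsto (fun N => A x' N - A y N) atTop (nhds 0) := by
    intro x' y
    rw [NormedAddCommGroup.tendsto_nhds_zero]
    intro ε hε
    obtain ⟨U, hUopen, hU0, hUprop⟩ := aux_unifSmall φ hφ (show (0 : ℝ) < ε / 4 by linarith)
    have hV : IsOpen ((fun w => (y - x') - w) ⁻¹' U) :=
      hUopen.preimage (continuous_const.sub continuous_id)
    obtain ⟨w, hwmem, hw⟩ := hγ.exists_mem_open hV ⟨y - x', by simp [hU0]⟩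
    obtain ⟨n₀, rfl⟩ := hwmem
    rw [Set.mem_preimage] at hw
    set δ := (y - x') - n₀ • γ with hδ
    have hstat : ∀ N : ℕ, 1 ≤ N → ‖A y N - A (x' + n₀ • γ) N‖ ≤ ε / 4 := by
      intro N hN
      simp only [hA]
      rw [← mul_sub, ← Finset.sum_sub_distrib]
      refine aux_avgC (fun n => φ (y + n • γ) - φ (x' + n₀ • γ + n • γ)) (by linarith) ?_ N
      intro n
      have h := hUprop δ hw (x' + n₀ • γ + n • γ)
      have heq : (x' + n₀ • γ + n • γ) + δ = y + n • γ := by rw [hδ]; abel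
      rwa [heq] at h
    have hd : ∀ᶠ N : ℕ in atTop, (N : ℝ)⁻¹ * (2 * (n₀.natAbs : ℝ) * C) < ε / 2 :=
      (hdrift0 n₀).eventually_lt_const (by linarith)
    filter_upwards [hd, eventually_ge_atTop 1] with N hdN hN1
    have t1 : ‖A (x' + n₀ • γ) N - A x' N‖ < ε / 2 := lt_of_le_of_lt (hdrift x' n₀ N) hdN
    have t2 : ‖A y N - A (x' + n₀ • γ) N‖ ≤ ε / 4 := hstat N hN1
    have hsplit : A x' N - A y N
        = -(A (x' + n₀ • γ) N - A x' N) + -(A y N - A (x' + n₀ • γ) N) := by ring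
    calc ‖A x' N - A y N‖
        = ‖-(A (x' + n₀ • γ) N - A x' N) + -(A y N - A (x' + n₀ • γ) N)‖ := by rw [hsplit]
    _ ≤ ‖A (x' + n₀ • γ) N - A x' N‖ + ‖A y N - A (x' + n₀ • γ) N‖ := by
        refine le_trans (norm_add_le _ _) ?_
        rw [norm_neg, norm_neg]
    _ < ε := by linarith
  have hkey : Tendsto (fun N : ℕ => ∫ y, ‖A x N - A y N‖ ∂m) atTop (nhds 0) := by
    have hDCT := tendsto_integral_of_dominated_convergence (μ := m)
      (F := fun N y => ‖A x N - A y N‖) (f := fun _ => (0 : ℝ)) (fun _ => 2 * C)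
      (fun N => ((continuous_const.sub (hAcont N)).norm).aestronglyMeasurable)
      (integrable_const _)
      (fun N => Filter.Eventually.of_forall fun y => by
        rw [norm_norm]
        calc ‖A x N - A y N‖ ≤ ‖A x N‖ + ‖A y N‖ := norm_sub_le _ _
        _ ≤ 2 * C := by have h1 := hAbound x N; have h2 := hAbound y N; linarith)
      (Filter.Eventually.of_forall fun y => by simpa using (hpair x y).norm)
    simpa using hDCT
  have hfinal : ∀ᶠ N : ℕ in atTop,
      ‖A x N - ∫ z, φ z ∂m‖ ≤ ∫ y, ‖A x N - A y N‖ ∂m := by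
    filter_upwards [eventually_ge_atTop 1] with N hN
    have h1 : A x N - ∫ z, φ z ∂m = ∫ y, (A x N - A y N) ∂m := by
      rw [integral_sub (integrable_const _) (hInt N), integral_const, hAint N hN]
      simp
    rw [h1]
    exact norm_integral_le_integral_norm _
  have := squeeze_zero_norm' hfinal hkey
  exact tendsto_sub_nhds_zero_iff.mp this

end rotation

/-- If `Z` is a connected compact abelian group with Haar probability measure `m` and `α, β`
each generate a dense subgroup, then for every continuous `f : Z → ℂ`,
`(1/N) ∑_{n=1}^N f(nα + n²β) → ∫ f dm`. -/
theorem stmt7 {Z : Type*} [AddCommGroup Z] [TopologicalSpace Z] [IsTopologicalAddGroup Z]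
    [CompactSpace Z] [ConnectedSpace Z] [T2Space Z] [MeasurableSpace Z] [BorelSpace Z]
    (m : Measure Z) [m.IsAddHaarMeasure] [IsProbabilityMeasure m]
    (α β : Z)
    (hα : Dense (Set.range fun n : ℤ => n • α))
    (hβ : Dense (Set.range fun n : ℤ => n • β))
    (f : Z → ℂ) (hf : Continuous f) :
    Filter.Tendsto
      (fun N : ℕ => (N : ℂ)⁻¹ * ∑ n ∈ Finset.Icc 1 N, f (n • α + n ^ 2 • β))
      Filter.atTop (nhds (∫ z, f z ∂m)) := by
  set c : ℂ := ∫ z, f z ∂m with hcdef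
  set f₀ : Z → ℂ := fun z => f z - c with hf₀def
  have hf₀c : Continuous f₀ := hf.sub continuous_const
  have hf₀int : ∫ z, f₀ z ∂m = 0 := by
    simp only [hf₀def]
    rw [integral_sub (aux_contIntegrable m hf) (integrable_const _), integral_const]
    simp [hcdef]
  obtain ⟨C, hCb⟩ := isCompact_univ.exists_bound_of_continuousOn hf₀c.continuousOn
  replace hCb : ∀ z, ‖f₀ z‖ ≤ C := fun z => hCb z (Set.mem_univ z)
  have hC0 : 0 ≤ C := le_trans (norm_nonneg _) (hCb 0)
  set xq : ℕ → Z := fun n => n • α + n ^ 2 • β with hxqdef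
  set g : ℕ → Z → ℂ := fun N y => (N : ℂ)⁻¹ * ∑ n ∈ Icc 1 N, f₀ (y + xq n) with hgdef
  have hgcont : ∀ N, Continuous (g N) := fun N => continuous_const.mul
    (continuous_finset_sum _ fun n _ => hf₀c.comp (continuous_id.add continuous_const))
  have hgbound : ∀ N y, ‖g N y‖ ≤ C := fun N y => aux_avgC _ hC0 (fun n => hCb _) N
  -- the correlation function
  set φ : Z → ℂ := fun t => ∫ z, f₀ (z + t) * (starRingEnd ℂ) (f₀ z) ∂m with hφdef
  have hintz : ∀ t : Z, Integrable (fun z => f₀ (z + t) * (starRingEnd ℂ) (f₀ z)) m :=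
    fun t => aux_contIntegrable m ((hf₀c.comp (continuous_id.add continuous_const)).mul
      (Complex.continuous_conj.comp hf₀c))
  have hφbound : ∀ t, ‖φ t‖ ≤ C * C := by
    intro t
    refine le_trans (norm_integral_le_integral_norm _) ?_
    have h1 : ∀ z : Z, ‖f₀ (z + t) * (starRingEnd ℂ) (f₀ z)‖ ≤ C * C := by
      intro z
      rw [norm_mul, RCLike.norm_conj]
      exact mul_le_mul (hCb _) (hCb _) (norm_nonneg _) hC0
    calc ∫ z, ‖f₀ (z + t) * (starRingEnd ℂ) (f₀ z)‖ ∂m ≤ ∫ _z, C * C ∂m :=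
          integral_mono (hintz t).norm (integrable_const _) h1
    _ = C * C := by simp
  have hφcont : Continuous φ := by
    rw [continuous_iff_continuousAt]
    intro s
    rw [ContinuousAt, Metric.tendsto_nhds]
    intro ε hε
    have hε4 : 0 < ε / (2 * (C + 1)) := by positivity
    obtain ⟨U, hUopen, hU0, hUp⟩ := aux_unifSmall f₀ hf₀c hε4
    have hmem : {t : Z | t - s ∈ U} ∈ nhds s := by
      have ho : IsOpen {t : Z | t - s ∈ U} :=
        hUopen.preimage (continuous_id.sub continuous_const)
      exact ho.mem_nhds (by simp [hU0])
    filter_upwards [hmem] with t ht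
    rw [dist_eq_norm]
    have hdi : Integrable (fun z => (f₀ (z + t) - f₀ (z + s)) * (starRingEnd ℂ) (f₀ z)) m :=
      aux_contIntegrable m (((hf₀c.comp (continuous_id.add continuous_const)).sub
        (hf₀c.comp (continuous_id.add continuous_const))).mul
        (Complex.continuous_conj.comp hf₀c))
    have hsub : φ t - φ s = ∫ z, (f₀ (z + t) - f₀ (z + s)) * (starRingEnd ℂ) (f₀ z) ∂m := by
      simp only [hφdef]
      rw [← integral_sub (hintz t) (hintz s)]
      refine integral_congr_ae (Filter.Eventually.of_forall fun z => ?_)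
      ring
    have hb : ∀ z : Z, ‖(f₀ (z + t) - f₀ (z + s)) * (starRingEnd ℂ) (f₀ z)‖
        ≤ (ε / (2 * (C + 1))) * C := by
      intro z
      rw [norm_mul, RCLike.norm_conj]
      refine mul_le_mul ?_ (hCb z) (norm_nonneg _) (le_of_lt hε4)
      have h := hUp (t - s) ht (z + s)
      rwa [show z + s + (t - s) = z + t from by abel] at h
    have hmain : ‖φ t - φ s‖ ≤ (ε / (2 * (C + 1))) * C := by
      rw [hsub]
      refine le_trans (norm_integral_le_integral_norm _) ?_
      calc ∫ z, ‖(f₀ (z + t) - f₀ (z + s)) * (starRingEnd ℂ) (f₀ z)‖ ∂m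
          ≤ ∫ _z, (ε / (2 * (C + 1))) * C ∂m := integral_mono hdi.norm (integrable_const _) hb
      _ = (ε / (2 * (C + 1))) * C := by simp
    have h2 : (ε / (2 * (C + 1))) * C ≤ ε / 2 := by
      rw [div_mul_eq_mul_div, div_le_div_iff₀ (by positivity) (by norm_num)]
      nlinarith
    linarith
  have hφeval : ∀ a b : Z, ∫ z, f₀ (z + a) * (starRingEnd ℂ) (f₀ (z + b)) ∂m = φ (a - b) := by
    intro a b
    simp only [hφdef]
    rw [← integral_add_right_eq_self (μ := m)
      (fun y => f₀ (y + (a - b)) * (starRingEnd ℂ) (f₀ y)) b]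
    refine integral_congr_ae (Filter.Eventually.of_forall fun z => ?_)
    dsimp only
    rw [show z + b + (a - b) = z + a from by abel]
  have hφ0 : ∫ t, φ t ∂m = 0 := by
    have hcont2 : Continuous (Function.uncurry
        fun (t z : Z) => f₀ (z + t) * (starRingEnd ℂ) (f₀ z)) := by
      exact (hf₀c.comp (continuous_snd.add continuous_fst)).mul
        (Complex.continuous_conj.comp (hf₀c.comp continuous_snd))
    have hswap := integral_integral_swap_of_hasCompactSupport hcont2
      (HasCompactSupport.of_compactSpace _) (μ := m) (ν := m)
    simp only [hφdef]
    rw [hswap]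
    have hzero : ∀ z : Z, ∫ t, f₀ (z + t) * (starRingEnd ℂ) (f₀ z) ∂m = 0 := by
      intro z
      rw [integral_mul_const, integral_add_left_eq_self f₀ z, hf₀int, zero_mul]
    rw [integral_congr_ae (Filter.Eventually.of_forall hzero)]
    simp
  -- reduction of the goal
  have hred : ∀ᶠ N : ℕ in atTop,
      (N : ℂ)⁻¹ * ∑ n ∈ Icc 1 N, f (xq n) = g N 0 + c := by
    filter_upwards [eventually_ge_atTop 1] with N hN
    have hterm : ∀ n ∈ Icc 1 N, f (xq n) = f₀ (0 + xq n) + c := by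
      intro n _
      simp [hf₀def]
    rw [Finset.sum_congr rfl hterm, Finset.sum_add_distrib, mul_add, Finset.sum_const,
      Nat.card_Icc, Nat.add_sub_cancel, nsmul_eq_mul, ← mul_assoc,
      inv_mul_cancel₀ (show (N : ℂ) ≠ 0 from Nat.cast_ne_zero.mpr (by omega)), one_mul]
  suffices hgoal : Tendsto (fun N => g N 0) atTop (nhds 0) by
    have h1 := hgoal.add_const c
    rw [zero_add] at h1
    exact Tendsto.congr' (hred.mono fun N hN => hN.symm) h1
  -- main estimate: the L² norms of g N tend to 0
  have hQ : Tendsto (fun N => ∫ y, ‖g N y‖ ^ 2 ∂m) atTop (nhds 0) := by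
    rw [NormedAddCommGroup.tendsto_nhds_zero]
    intro ε hε
    obtain ⟨H, hHgt⟩ := exists_nat_gt ((C * C + 1) / (ε / 2))
    have hHpos : 0 < (H : ℝ) := lt_of_le_of_lt (by positivity) hHgt
    have hH1 : 1 ≤ H := by
      by_contra hcon
      push_neg at hcon
      interval_cases H
      · simp at hHpos
    have hHne : (H : ℂ) ≠ 0 := Nat.cast_ne_zero.mpr (by omega)
    have hHbound : (C * C + 1) / (H : ℝ) < ε / 2 := by
      rw [div_lt_iff₀ hHpos]
      have := (div_lt_iff₀ (by linarith : (0 : ℝ) < ε / 2)).mp hHgt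
      linarith
    set w : ℕ → Z → ℂ := fun n y => (H : ℂ)⁻¹ * ∑ i ∈ Icc 1 H, f₀ (y + xq (n + i)) with hwdef
    have hwcont : ∀ n, Continuous (w n) := fun n => continuous_const.mul
      (continuous_finset_sum _ fun i _ => hf₀c.comp (continuous_id.add continuous_const))
    have hwbound : ∀ n y, ‖w n y‖ ≤ C := fun n y => aux_avgC _ hC0 (fun i => hCb _) H
    set G : ℕ → Z → ℂ := fun N y => (N : ℂ)⁻¹ * ∑ n ∈ Icc 1 N, w n y with hGdef
    have hGcont : ∀ N, Continuous (G N) := fun N => continuous_const.mul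
      (continuous_finset_sum _ fun n _ => hwcont n)
    have hGbound : ∀ N y, ‖G N y‖ ≤ C := fun N y => aux_avgC _ hC0 (fun n => hwbound n y) N
    set d : ℕ → ℝ := fun N => (N : ℝ)⁻¹ * (2 * (H : ℝ) * C) with hddef
    have hd0 : ∀ N, 0 ≤ d N := fun N => by positivity
    -- approximation of g by G
    have happrox : ∀ N y, ‖g N y - G N y‖ ≤ d N := by
      intro N y
      have hswap2 : G N y = (H : ℂ)⁻¹ * ∑ i ∈ Icc 1 H,
          ((N : ℂ)⁻¹ * ∑ n ∈ Icc 1 N, f₀ (y + xq (n + i))) := by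
        simp only [hGdef, hwdef]
        simp only [Finset.mul_sum]
        rw [Finset.sum_comm]
        exact Finset.sum_congr rfl fun i _ => Finset.sum_congr rfl fun n _ => by ring
      have havg : g N y = (H : ℂ)⁻¹ * ∑ _i ∈ Icc 1 H, g N y := by
        rw [Finset.sum_const, Nat.card_Icc, Nat.add_sub_cancel, nsmul_eq_mul, ← mul_assoc,
          inv_mul_cancel₀ hHne, one_mul]
      rw [hswap2]
      nth_rewrite 1 [havg]
      rw [← mul_sub, ← Finset.sum_sub_distrib, norm_mul, norm_inv, Complex.norm_natCast]
      have hterm : ∀ i ∈ Icc 1 H,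
          ‖g N y - (N : ℂ)⁻¹ * ∑ n ∈ Icc 1 N, f₀ (y + xq (n + i))‖ ≤ d N := by
        intro i hi
        rw [norm_sub_rev]
        have hwin := aux_winNat (fun k => f₀ (y + xq k)) (fun k => hCb _) i N
        simp only [hgdef]
        refine le_trans hwin ?_
        simp only [hddef]
        have hiH : (i : ℝ) ≤ (H : ℝ) := by exact_mod_cast (Finset.mem_Icc.mp hi).2
        gcongr
      have hsum : ‖∑ i ∈ Icc 1 H, (g N y - (N : ℂ)⁻¹ * ∑ n ∈ Icc 1 N, f₀ (y + xq (n + i)))‖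
          ≤ (H : ℝ) * d N := by
        refine le_trans (norm_sum_le _ _) ?_
        have := Finset.sum_le_card_nsmul (Icc 1 H)
          (fun i => ‖g N y - (N : ℂ)⁻¹ * ∑ n ∈ Icc 1 N, f₀ (y + xq (n + i))‖) (d N)
          (fun i hi => hterm i hi)
        rwa [Nat.card_Icc, Nat.add_sub_cancel, nsmul_eq_mul] at this
      calc (H : ℝ)⁻¹ * ‖∑ i ∈ Icc 1 H,
            (g N y - (N : ℂ)⁻¹ * ∑ n ∈ Icc 1 N, f₀ (y + xq (n + i)))‖
          ≤ (H : ℝ)⁻¹ * ((H : ℝ) * d N) := by gcongr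
      _ = d N := by field_simp
    -- expansion of the L² norm of w n
    have hnormsq : ∀ z : ℂ, ‖z‖ ^ 2 = (z * (starRingEnd ℂ) z).re := by
      intro z
      rw [Complex.mul_conj, Complex.ofReal_re, ← Complex.sq_norm]
    have hwint : ∀ n : ℕ, ∫ y, ‖w n y‖ ^ 2 ∂m
        = ((H : ℂ)⁻¹ * (H : ℂ)⁻¹ * ∑ i ∈ Icc 1 H, ∑ j ∈ Icc 1 H,
            φ (xq (n + i) - xq (n + j))).re := by
      intro n
      have hexp : ∀ y : Z, w n y * (starRingEnd ℂ) (w n y)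
          = (H : ℂ)⁻¹ * ((H : ℂ)⁻¹ * ∑ i ∈ Icc 1 H, ∑ j ∈ Icc 1 H,
              f₀ (y + xq (n + i)) * (starRingEnd ℂ) (f₀ (y + xq (n + j)))) := by
        intro y
        simp only [hwdef]
        rw [map_mul, map_inv₀, map_natCast, map_sum, mul_mul_mul_comm,
          Finset.sum_mul_sum]
        ring
      have hci : Continuous fun y => w n y * (starRingEnd ℂ) (w n y) :=
        (hwcont n).mul (Complex.continuous_conj.comp (hwcont n))
      have hre := integral_re (aux_contIntegrable m hci)
      simp only [RCLike.re_eq_complex_re] at hre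
      have hstep1 : ∫ y, ‖w n y‖ ^ 2 ∂m = (∫ y, w n y * (starRingEnd ℂ) (w n y) ∂m).re := by
        rw [← hre]
        exact integral_congr_ae (Filter.Eventually.of_forall fun y => hnormsq (w n y))
      rw [hstep1]
      congr 1
      rw [integral_congr_ae (Filter.Eventually.of_forall hexp)]
      rw [integral_const_mul, integral_const_mul]
      rw [integral_finset_sum (Icc 1 H) (f := fun (i : ℕ) (y : Z) =>
          ∑ j ∈ Icc 1 H, f₀ (y + xq (n + i)) * (starRingEnd ℂ) (f₀ (y + xq (n + j))))
        (fun i _ => aux_contIntegrable m (continuous_finset_sum _ fun j _ =>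
          (hf₀c.comp (continuous_id.add continuous_const)).mul
            (Complex.continuous_conj.comp (hf₀c.comp (continuous_id.add continuous_const)))))]
      rw [mul_assoc]
      congr 1
      congr 1
      refine Finset.sum_congr rfl fun i _ => ?_
      rw [integral_finset_sum (Icc 1 H) (f := fun (j : ℕ) (y : Z) =>
          f₀ (y + xq (n + i)) * (starRingEnd ℂ) (f₀ (y + xq (n + j))))
        (fun j _ => aux_contIntegrable m
          ((hf₀c.comp (continuous_id.add continuous_const)).mul
            (Complex.continuous_conj.comp (hf₀c.comp (continuous_id.add continuous_const)))))]
      exact Finset.sum_congr rfl fun j _ => hφeval _ _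
    -- the complex-valued averaged correlation sums
    set T : ℕ → ℕ → ℕ → ℂ := fun i j N =>
      (N : ℂ)⁻¹ * ∑ n ∈ Icc 1 N, φ (xq (n + i) - xq (n + j)) with hTdef
    set KR : ℕ → ℝ := fun N => (N : ℝ)⁻¹ * ∑ n ∈ Icc 1 N, ∫ y, ‖w n y‖ ^ 2 ∂m with hKRdef
    have hKN : ∀ N : ℕ, KR N
        = ((H : ℂ)⁻¹ * (H : ℂ)⁻¹ * ∑ i ∈ Icc 1 H, ∑ j ∈ Icc 1 H, T i j N).re := by
      intro N
      simp only [hKRdef]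
      rw [Finset.sum_congr rfl (fun n _ => hwint n)]
      rw [← Complex.re_sum]
      rw [← Complex.re_ofReal_mul]
      congr 1
      rw [show (((N : ℝ)⁻¹ : ℝ) : ℂ) = (N : ℂ)⁻¹ from by
        rw [Complex.ofReal_inv, Complex.ofReal_natCast]]
      simp only [hTdef, Finset.mul_sum]
      rw [Finset.sum_comm]
      refine Finset.sum_congr rfl fun i _ => ?_
      rw [Finset.sum_comm]
      refine Finset.sum_congr rfl fun j _ => Finset.sum_congr rfl fun n _ => by ring
    -- limits of the correlation averages
    have hTlim : ∀ i ∈ Icc 1 H, ∀ j ∈ Icc 1 H,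
        Tendsto (fun N => T i j N) atTop (nhds (if i = j then φ 0 else 0)) := by
      intro i hi j hj
      by_cases hij : i = j
      · subst hij
        rw [if_pos rfl]
        refine Tendsto.congr' ?_ (tendsto_const_nhds (x := φ 0))
        filter_upwards [eventually_ge_atTop 1] with N hN
        simp only [hTdef, sub_self]
        rw [Finset.sum_const, Nat.card_Icc, Nat.add_sub_cancel, nsmul_eq_mul, ← mul_assoc,
          inv_mul_cancel₀ (show (N : ℂ) ≠ 0 from Nat.cast_ne_zero.mpr (by omega)), one_mul]
      · rw [if_neg hij]
        have hk : (2 * ((i : ℤ) - (j : ℤ))) ≠ 0 := by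
          have hij2 : (i : ℤ) ≠ (j : ℤ) := by exact_mod_cast hij
          omega
        have hdense := aux_dense_zsmul hβ hk
        have hxz : ∀ k : ℕ, xq k = (k : ℤ) • α + ((k : ℤ) ^ 2) • β := by
          intro k
          simp only [hxqdef]
          rw [← natCast_zsmul α k, ← natCast_zsmul β (k ^ 2)]
          norm_cast
        have hxdiff : ∀ n : ℕ, xq (n + i) - xq (n + j)
            = (((i : ℤ) - (j : ℤ)) • α + (((i : ℤ)) ^ 2 - ((j : ℤ)) ^ 2) • β)
              + n • ((2 * ((i : ℤ) - (j : ℤ))) • β) := by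
          intro n
          rw [hxz (n + i), hxz (n + j)]
          rw [show (n : ℕ) • ((2 * ((i : ℤ) - (j : ℤ))) • β)
              = ((n : ℤ) * (2 * ((i : ℤ) - (j : ℤ)))) • β from by
            rw [← natCast_zsmul ((2 * ((i : ℤ) - (j : ℤ))) • β) n, smul_smul]]
          push_cast
          module
        have hlim := aux_lemA m hdense hφcont
          (((i : ℤ) - (j : ℤ)) • α + (((i : ℤ)) ^ 2 - ((j : ℤ)) ^ 2) • β)
        rw [hφ0] at hlim
        refine Tendsto.congr (fun N => ?_) hlim
        simp only [hTdef]
        congr 1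
        exact Finset.sum_congr rfl fun n _ => by rw [hxdiff n]
    have hKclim : Tendsto (fun N => ((H : ℂ)⁻¹ * (H : ℂ)⁻¹ *
          ∑ i ∈ Icc 1 H, ∑ j ∈ Icc 1 H, T i j N)) atTop
        (nhds ((H : ℂ)⁻¹ * (H : ℂ)⁻¹ *
          ∑ i ∈ Icc 1 H, ∑ j ∈ Icc 1 H, if i = j then φ 0 else 0)) := by
      refine Tendsto.const_mul _ ?_
      refine tendsto_finset_sum _ fun i hi => ?_
      exact tendsto_finset_sum _ fun j hj => hTlim i hi j hj
    have hdiag : ∑ i ∈ Icc 1 H, ∑ j ∈ Icc 1 H, (if i = j then φ 0 else (0 : ℂ))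
        = (H : ℂ) * φ 0 := by
      have hrow : ∀ i ∈ Icc 1 H, ∑ j ∈ Icc 1 H, (if i = j then φ 0 else (0 : ℂ)) = φ 0 := by
        intro i hi
        rw [Finset.sum_ite_eq (Icc 1 H) i (fun _ => φ 0), if_pos hi]
      rw [Finset.sum_congr rfl hrow, Finset.sum_const, Nat.card_Icc, Nat.add_sub_cancel,
        nsmul_eq_mul]
    have hlr : ((H : ℂ)⁻¹ * (H : ℂ)⁻¹ * ((H : ℂ) * φ 0)) = (((H : ℝ)⁻¹ : ℝ) : ℂ) * φ 0 := by
      push_cast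
      field_simp
    have hKRlim : Tendsto KR atTop (nhds ((H : ℝ)⁻¹ * (φ 0).re)) := by
      have h1 := (Complex.continuous_re.tendsto _).comp hKclim
      rw [Function.comp_def] at h1
      rw [hdiag, hlr, Complex.re_ofReal_mul] at h1
      exact Tendsto.congr (fun N => (hKN N).symm) h1
    have hlrlt : (H : ℝ)⁻¹ * (φ 0).re < ε / 2 := by
      have h1 : (φ 0).re ≤ C * C := by
        refine le_trans (Complex.re_le_norm _) ?_
        exact hφbound 0
      have h2 : (H : ℝ)⁻¹ * (φ 0).re ≤ (H : ℝ)⁻¹ * (C * C) :=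
        mul_le_mul_of_nonneg_left h1 (by positivity)
      have h3 : (H : ℝ)⁻¹ * (C * C) < (H : ℝ)⁻¹ * (C * C + 1) := by
        have hi : (0 : ℝ) < (H : ℝ)⁻¹ := by positivity
        nlinarith
      have h4 : (H : ℝ)⁻¹ * (C * C + 1) = (C * C + 1) / (H : ℝ) := by ring
      linarith
    have hintG2 : ∀ N, Integrable (fun y => ‖G N y‖ ^ 2) m := fun N =>
      ((hGcont N).norm.pow 2).integrable_of_hasCompactSupport
        (HasCompactSupport.of_compactSpace _)
    have hintw2 : ∀ n, Integrable (fun y => ‖w n y‖ ^ 2) m := fun n =>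
      ((hwcont n).norm.pow 2).integrable_of_hasCompactSupport
        (HasCompactSupport.of_compactSpace _)
    have hintg2 : ∀ N, Integrable (fun y => ‖g N y‖ ^ 2) m := fun N =>
      ((hgcont N).norm.pow 2).integrable_of_hasCompactSupport
        (HasCompactSupport.of_compactSpace _)
    have hGK : ∀ N : ℕ, 1 ≤ N → ∫ y, ‖G N y‖ ^ 2 ∂m ≤ KR N := by
      intro N hN
      have hNne : (N : ℝ) ≠ 0 := Nat.cast_ne_zero.mpr (by omega)
      have hptw : ∀ y, ‖G N y‖ ^ 2 ≤ (N : ℝ)⁻¹ * ∑ n ∈ Icc 1 N, ‖w n y‖ ^ 2 := by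
        intro y
        have h1 : ‖G N y‖ ≤ (N : ℝ)⁻¹ * ∑ n ∈ Icc 1 N, ‖w n y‖ := by
          simp only [hGdef]
          rw [norm_mul, norm_inv, Complex.norm_natCast]
          exact mul_le_mul_of_nonneg_left (norm_sum_le _ _) (by positivity)
        have h2 : (∑ n ∈ Icc 1 N, ‖w n y‖) ^ 2 ≤ (N : ℝ) * ∑ n ∈ Icc 1 N, ‖w n y‖ ^ 2 := by
          have hcs := sq_sum_le_card_mul_sum_sq (s := Icc 1 N) (f := fun n => ‖w n y‖)
          rwa [Nat.card_Icc, Nat.add_sub_cancel] at hcs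
        calc ‖G N y‖ ^ 2 ≤ ((N : ℝ)⁻¹ * ∑ n ∈ Icc 1 N, ‖w n y‖) ^ 2 :=
              pow_le_pow_left₀ (norm_nonneg _) h1 2
        _ = (N : ℝ)⁻¹ * (N : ℝ)⁻¹ * (∑ n ∈ Icc 1 N, ‖w n y‖) ^ 2 := by ring
        _ ≤ (N : ℝ)⁻¹ * (N : ℝ)⁻¹ * ((N : ℝ) * ∑ n ∈ Icc 1 N, ‖w n y‖ ^ 2) := by gcongr
        _ = (N : ℝ)⁻¹ * ∑ n ∈ Icc 1 N, ‖w n y‖ ^ 2 := by field_simp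
      calc ∫ y, ‖G N y‖ ^ 2 ∂m ≤ ∫ y, (N : ℝ)⁻¹ * ∑ n ∈ Icc 1 N, ‖w n y‖ ^ 2 ∂m := by
            refine integral_mono (hintG2 N) ?_ hptw
            exact (integrable_finset_sum _ (fun n _ => hintw2 n)).const_mul _
      _ = KR N := by
          rw [integral_const_mul, integral_finset_sum (Icc 1 N) (fun n _ => hintw2 n)]
    have hQle : ∀ N : ℕ, 1 ≤ N →
        ∫ y, ‖g N y‖ ^ 2 ∂m ≤ KR N + d N * (2 * C + d N) := by
      intro N hN
      have hptw : ∀ y, ‖g N y‖ ^ 2 ≤ ‖G N y‖ ^ 2 + d N * (2 * C + d N) := by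
        intro y
        have h1 : ‖g N y‖ ≤ ‖G N y‖ + d N := by
          calc ‖g N y‖ = ‖G N y + (g N y - G N y)‖ := by congr 1; ring
          _ ≤ ‖G N y‖ + ‖g N y - G N y‖ := norm_add_le _ _
          _ ≤ ‖G N y‖ + d N := by have := happrox N y; linarith
        nlinarith [hGbound N y, hd0 N, norm_nonneg (g N y), norm_nonneg (G N y)]
      calc ∫ y, ‖g N y‖ ^ 2 ∂m ≤ ∫ y, (‖G N y‖ ^ 2 + d N * (2 * C + d N)) ∂m :=
            integral_mono (hintg2 N) ((hintG2 N).add (integrable_const _)) hptw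
      _ = (∫ y, ‖G N y‖ ^ 2 ∂m) + d N * (2 * C + d N) := by
          rw [integral_add (hintG2 N) (integrable_const _), integral_const]
          simp
      _ ≤ KR N + d N * (2 * C + d N) := by have := hGK N hN; linarith
    have hdlim : Tendsto d atTop (nhds 0) := by
      simpa using tendsto_inv_atTop_nhds_zero_nat.mul_const (2 * (H : ℝ) * C)
    have helim : Tendsto (fun N => d N * (2 * C + d N)) atTop (nhds 0) := by
      have := hdlim.mul ((tendsto_const_nhds (x := 2 * C)).add hdlim)
      simpa using this
    have hKRev : ∀ᶠ N in atTop, KR N < ε / 2 := hKRlim.eventually_lt_const hlrlt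
    have heev : ∀ᶠ N in atTop, d N * (2 * C + d N) < ε / 2 :=
      helim.eventually_lt_const (by linarith)
    filter_upwards [hKRev, heev, eventually_ge_atTop 1] with N h1 h2 h3
    have hQnn : 0 ≤ ∫ y, ‖g N y‖ ^ 2 ∂m := integral_nonneg fun y => by positivity
    rw [Real.norm_eq_abs, abs_of_nonneg hQnn]
    have := hQle N h3
    linarith
  -- extraction: from L² convergence to the value at 0
  have hintg2 : ∀ N, Integrable (fun y => ‖g N y‖ ^ 2) m := fun N =>
    ((hgcont N).norm.pow 2).integrable_of_hasCompactSupport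
      (HasCompactSupport.of_compactSpace _)
  rw [NormedAddCommGroup.tendsto_nhds_zero]
  intro ε hε
  obtain ⟨U, hUopen, hU0, hUp⟩ := aux_unifSmall f₀ hf₀c (show (0 : ℝ) < ε / 4 by linarith)
  have hmU : 0 < (m U).toReal :=
    ENNReal.toReal_pos (ne_of_gt (hUopen.measure_pos m ⟨0, hU0⟩)) (measure_ne_top m U)
  have hev := hQ.eventually_lt_const
    (show (0 : ℝ) < (ε / 4) ^ 2 * (m U).toReal by positivity)
  filter_upwards [hev, eventually_ge_atTop 1] with N hQN hN1
  by_contra hbig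
  push_neg at hbig
  have hdiffb : ∀ x ∈ U, ‖g N x - g N 0‖ ≤ ε / 4 := by
    intro x hx
    simp only [hgdef]
    rw [← mul_sub, ← Finset.sum_sub_distrib]
    refine aux_avgC (fun n => f₀ (x + xq n) - f₀ ((0 : Z) + xq n)) (by linarith) ?_ N
    intro n
    have h := hUp x hx (xq n)
    rw [show (x + xq n : Z) = xq n + x from add_comm _ _,
      show ((0 : Z) + xq n) = xq n from zero_add _]
    exact h
  have hlow : ∀ x ∈ U, (ε - ε / 4) ^ 2 ≤ ‖g N x‖ ^ 2 := by
    intro x hx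
    have habs := abs_norm_sub_norm_le (g N 0) (g N x)
    have h2 := hdiffb x hx
    rw [norm_sub_rev] at h2
    have h3 : ε - ε / 4 ≤ ‖g N x‖ := by
      have := abs_le.mp habs
      linarith [hbig, this.1, this.2]
    exact pow_le_pow_left₀ (by linarith) h3 2
  have hup : (ε - ε / 4) ^ 2 * (m U).toReal ≤ ∫ y, ‖g N y‖ ^ 2 ∂m := by
    have hsi : (ε - ε / 4) ^ 2 * (m U).toReal ≤ ∫ x in U, ‖g N x‖ ^ 2 ∂m :=
      by have := setIntegral_ge_of_const_le hUopen.measurableSet (measure_ne_top m U) hlow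
           (hintg2 N).integrableOn
         rw [smul_eq_mul, mul_comm, measureReal_def] at this
         exact this
    have hsi2 : ∫ x in U, ‖g N x‖ ^ 2 ∂m ≤ ∫ y, ‖g N y‖ ^ 2 ∂m :=
      setIntegral_le_integral (hintg2 N) (Filter.Eventually.of_forall fun y => by positivity)
    linarith
  have hcontr : (ε / 4) ^ 2 * (m U).toReal < (ε - ε / 4) ^ 2 * (m U).toReal := by
    have h5 : (ε / 4) ^ 2 < (ε - ε / 4) ^ 2 := by nlinarith
    exact mul_lt_mul_of_pos_right h5 hmU
  linarith
end

section
/- Let S ⊆ ℤ, k ∈ ℕ, and δ ≥ 0. Suppose there exists an invertible probability measure preserving system (X, ℬ, μ, T) and A ⊆ X with μ(A) > δ such that μ(⋂_{j=0}^k T^{−js}A) = 0 for all s ∈ S. Then there exists a measurable A' ⊆ X with μ(A') > δ such that ⋂_{j=0}^k T^{−js}A' = ∅ for all s ∈ S. -/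
open MeasureTheory

/-- If there is an invertible probability measure preserving system and `A` with `μ(A) > δ`
such that `μ(⋂_{j=0}^k T^{−js}A) = 0` for all `s ∈ S`, then there is a measurable `A'` with
`μ(A') > δ` and `⋂_{j=0}^k T^{−js}A' = ∅` for all `s ∈ S`. -/
theorem stmt12 {X : Type*} [MeasurableSpace X] (μ : Measure X) [IsProbabilityMeasure μ]
    (T : Equiv.Perm X) (hT : ∀ n : ℤ, MeasurePreserving (⇑(T ^ n)) μ μ)
    (S : Set ℤ) (k : ℕ) (δ : ℝ)
    (A : Set X) (hA : MeasurableSet A) (hAδ : ENNReal.ofReal δ < μ A)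
    (hnull : ∀ s ∈ S, μ (⋂ j ∈ Finset.range (k + 1), ⇑(T ^ ((j : ℤ) * s)) ⁻¹' A) = 0) :
    ∃ A' : Set X, MeasurableSet A' ∧ ENNReal.ofReal δ < μ A' ∧
      ∀ s ∈ S, ⋂ j ∈ Finset.range (k + 1), ⇑(T ^ ((j : ℤ) * s)) ⁻¹' A' = ∅ := by
  set N : Set X := ⋃ s ∈ S, ⋂ j ∈ Finset.range (k + 1), ⇑(T ^ ((j : ℤ) * s)) ⁻¹' A with hN
  have hSc : S.Countable := S.to_countable
  have hNnull : μ N = 0 := (measure_biUnion_null_iff hSc).2 hnull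
  have hNm : MeasurableSet N :=
    MeasurableSet.biUnion hSc fun s _ =>
      MeasurableSet.biInter (Set.to_countable _) fun j _ => (hT _).measurable hA
  refine ⟨A \ N, hA.diff hNm, ?_, ?_⟩
  · rwa [measure_diff_null hNnull]
  · intro s hs
    ext x
    simp only [Set.mem_iInter, Set.mem_empty_iff_false, iff_false]
    intro hx
    have h0 := hx 0 (Finset.mem_range.2 (Nat.succ_pos k))
    simp only [Nat.cast_zero, zero_mul, pow_zero, Equiv.Perm.coe_one, Set.preimage_id,
      Set.mem_preimage, id_eq] at h0
    exact h0.2 (Set.mem_biUnion hs (Set.mem_iInter₂.2 fun j hj => (hx j hj).1))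
end

section
/- Let k ∈ ℕ and 0 ≤ δ < δ′. If S ⊆ ℤ is such that every finite subset of S is (δ′,k)-nonrecurrent, then S is (δ,k)-nonrecurrent. -/
open MeasureTheory Set
open scoped ENNReal

noncomputable section NonrecAux

/-- one-sided cylinder in `ℕ → Bool` -/
def NCyl (n : ℕ) (v : Fin n → Bool) : Set (ℕ → Bool) := {ω | ∀ i : Fin n, ω i = v i}

lemma measurableSet_NCyl (n : ℕ) (v : Fin n → Bool) : MeasurableSet (NCyl n v) := by
  have : NCyl n v = ⋂ i : Fin n, (fun ω : ℕ → Bool => ω i) ⁻¹' {v i} := by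
    ext ω; simp [NCyl]
  rw [this]
  exact MeasurableSet.iInter fun i => (measurable_pi_apply _) (measurableSet_singleton _)

variable (q : ∀ n, (Fin n → Bool) → ℝ≥0∞)

/-- left endpoint of the interval associated to a word -/
def aEnd : ∀ n, (Fin n → Bool) → ℝ≥0∞
  | 0, _ => 0
  | (n+1), w => aEnd n (Fin.init w) +
      cond (w (Fin.last n)) (q (n+1) (Fin.snoc (Fin.init w) false)) 0

lemma aEnd_snoc_false (n : ℕ) (w : Fin n → Bool) :
    aEnd q (n+1) (Fin.snoc w false) = aEnd q n w := by
  simp [aEnd, Fin.init_snoc, Fin.snoc_last]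

lemma aEnd_snoc_true (n : ℕ) (w : Fin n → Bool) :
    aEnd q (n+1) (Fin.snoc w true) = aEnd q n w + q (n+1) (Fin.snoc w false) := by
  simp [aEnd, Fin.init_snoc, Fin.snoc_last]

variable (hq1 : ∀ v, q 0 v = 1)
  (hq2 : ∀ n v, q (n+1) (Fin.snoc v false) + q (n+1) (Fin.snoc v true) = q n v)

include hq1 hq2 in
lemma aEnd_add_q_le : ∀ n (w : Fin n → Bool), aEnd q n w + q n w ≤ 1 := by
  intro n
  induction n with
  | zero => intro w; simp [aEnd, hq1 w]
  | succ n ih =>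
    intro w
    have hw : Fin.snoc (Fin.init w) (w (Fin.last n)) = w := Fin.snoc_init_self w
    cases hb : w (Fin.last n)
    · rw [← hw, hb, aEnd_snoc_false]
      calc aEnd q n (Fin.init w) + q (n+1) (Fin.snoc (Fin.init w) false)
          ≤ aEnd q n (Fin.init w) + q n (Fin.init w) := by
            refine add_le_add_right ?_ _
            rw [← hq2 n (Fin.init w)]; exact le_self_add
        _ ≤ 1 := ih _
    · rw [← hw, hb, aEnd_snoc_true, add_assoc, hq2]
      exact ih _

include hq1 hq2 in
lemma aEnd_ne_top (n : ℕ) (w : Fin n → Bool) : aEnd q n w + q n w ≠ ⊤ :=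
  fun h => by simpa [h] using (aEnd_add_q_le q hq1 hq2 n w).trans_lt (by norm_num : (1:ℝ≥0∞) < ⊤)

include hq1 hq2 in
lemma a_ne_top (n : ℕ) (w : Fin n → Bool) : aEnd q n w ≠ ⊤ := fun h => by
  exact aEnd_ne_top q hq1 hq2 n w (by rw [h]; simp)

include hq1 hq2 in
lemma q_ne_top (n : ℕ) (w : Fin n → Bool) : q n w ≠ ⊤ := fun h => by
  exact aEnd_ne_top q hq1 hq2 n w (by rw [h]; simp)

/-- the word of depth `n` containing `x` -/
def vfun (x : ℝ) : ∀ n, Fin n → Bool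
  | 0 => fun i => i.elim0
  | (n+1) => Fin.snoc (vfun x n)
      (decide ((aEnd q (n+1) (Fin.snoc (vfun x n) true)).toReal ≤ x))

lemma snoc_eq_iff {n : ℕ} {a u : Fin n → Bool} {c b : Bool} :
    (Fin.snoc a c : Fin (n+1) → Bool) = Fin.snoc u b ↔ a = u ∧ c = b := by
  constructor
  · intro h
    refine ⟨?_, ?_⟩
    · have := congrArg Fin.init h; simpa [Fin.init_snoc] using this
    · have := congrArg (fun f => f (Fin.last n)) h; simpa [Fin.snoc_last] using this
  · rintro ⟨rfl, rfl⟩; rfl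

include hq1 hq2 in
lemma vfun_mem : ∀ n (w : Fin n → Bool),
    {x : ℝ | x ∈ Ico (0:ℝ) 1 ∧ vfun q x n = w}
      = Ico (aEnd q n w).toReal ((aEnd q n w + q n w).toReal) := by
  intro n
  induction n with
  | zero =>
    intro w
    have hvw : ∀ x : ℝ, vfun q x 0 = w := fun x => funext fun i => i.elim0
    ext x
    simp [hvw, aEnd, hq1 w]
  | succ n ih =>
    have main : ∀ (u : Fin n → Bool) (b : Bool),
        {x : ℝ | x ∈ Ico (0:ℝ) 1 ∧ vfun q x (n+1) = Fin.snoc u b}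
          = Ico (aEnd q (n+1) (Fin.snoc u b)).toReal
              ((aEnd q (n+1) (Fin.snoc u b) + q (n+1) (Fin.snoc u b)).toReal) := by
      intro u b
      have hαβ := ih u
      set α := (aEnd q n u).toReal with hα
      set β := ((aEnd q n u + q n u)).toReal with hβ
      set τ := (aEnd q (n+1) (Fin.snoc u true)).toReal with hτ
      have hqmono : q (n+1) (Fin.snoc u false) ≤ q n u := by
        rw [← hq2 n u]; exact le_self_add
      have hατ : α ≤ τ := by
        rw [hα, hτ]
        refine ENNReal.toReal_mono (a_ne_top q hq1 hq2 _ _) ?_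
        rw [aEnd_snoc_true]; exact le_self_add
      have hτβ : τ ≤ β := by
        rw [hτ, hβ, aEnd_snoc_true]
        exact ENNReal.toReal_mono (aEnd_ne_top q hq1 hq2 n u) (add_le_add_right hqmono _)
      have key : {x : ℝ | x ∈ Ico (0:ℝ) 1 ∧ vfun q x (n+1) = Fin.snoc u b}
          = Ico α β ∩ {x : ℝ | decide (τ ≤ x) = b} := by
        rw [← hαβ]
        ext x
        simp only [mem_setOf_eq, mem_inter_iff]
        constructor
        · rintro ⟨hx, hv⟩
          rw [show vfun q x (n+1) = Fin.snoc (vfun q x n)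
            (decide ((aEnd q (n+1) (Fin.snoc (vfun q x n) true)).toReal ≤ x)) from rfl] at hv
          obtain ⟨h1, h2⟩ := snoc_eq_iff.mp hv
          rw [h1] at h2
          exact ⟨⟨hx, h1⟩, h2⟩
        · rintro ⟨⟨hx, h1⟩, h2⟩
          refine ⟨hx, ?_⟩
          rw [show vfun q x (n+1) = Fin.snoc (vfun q x n)
            (decide ((aEnd q (n+1) (Fin.snoc (vfun q x n) true)).toReal ≤ x)) from rfl]
          rw [h1, h2]
      rw [key]
      cases b
      · -- false child : interval [α, τ)
        have h1 : {x : ℝ | decide (τ ≤ x) = false} = Iio τ := by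
          ext x
          simp only [mem_setOf_eq, decide_eq_false_iff_not, mem_Iio, not_le]
        rw [h1]
        have h2 : Ico α β ∩ Iio τ = Ico α τ := by
          ext x
          simp only [mem_inter_iff, mem_Ico, mem_Iio]
          constructor
          · rintro ⟨⟨ha, _⟩, hc⟩; exact ⟨ha, hc⟩
          · rintro ⟨ha, hc⟩; exact ⟨⟨ha, lt_of_lt_of_le hc hτβ⟩, hc⟩
        rw [h2, hτ, aEnd_snoc_true, aEnd_snoc_false]
      · -- true child : interval [τ, β)
        have h1 : {x : ℝ | decide (τ ≤ x) = true} = Ici τ := by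
          ext x
          simp only [mem_setOf_eq, decide_eq_true_eq, mem_Ici]
        rw [h1]
        have h2 : Ico α β ∩ Ici τ = Ico τ β := by
          ext x
          simp only [mem_inter_iff, mem_Ico, mem_Ici]
          constructor
          · rintro ⟨⟨_, hc⟩, hd⟩; exact ⟨hd, hc⟩
          · rintro ⟨hd, hc⟩; exact ⟨⟨le_trans hατ hd, hc⟩, hd⟩
        rw [h2, hβ, hτ, aEnd_snoc_true, add_assoc, hq2]
    intro w
    have hw : Fin.snoc (Fin.init w) (w (Fin.last n)) = w := Fin.snoc_init_self w
    rw [← hw]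
    exact main _ _

lemma measurableSet_word {n : ℕ} (u : Fin n → Bool) :
    MeasurableSet {x : ℝ | vfun q x n = u} → True := fun _ => trivial

lemma measurable_vfun : ∀ n, Measurable (fun x : ℝ => vfun q x n) := by
  intro n
  induction n with
  | zero =>
    have : (fun x : ℝ => vfun q x 0) = fun _ => (fun i => i.elim0) := rfl
    rw [this]; exact measurable_const
  | succ n ih =>
    have hsing : ∀ u : Fin n → Bool, MeasurableSet {x : ℝ | vfun q x n = u} := by
      intro u
      have : {x : ℝ | vfun q x n = u} = (fun x => vfun q x n) ⁻¹' {u} := rfl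
      rw [this]
      exact ih (measurableSet_singleton u)
    have hdec : Measurable (fun x : ℝ =>
        decide ((aEnd q (n+1) (Fin.snoc (vfun q x n) true)).toReal ≤ x)) := by
      apply measurable_to_countable'
      intro b
      have : (fun x : ℝ =>
          decide ((aEnd q (n+1) (Fin.snoc (vfun q x n) true)).toReal ≤ x)) ⁻¹' {b}
          = ⋃ u : Fin n → Bool, {x : ℝ | vfun q x n = u} ∩
              {x : ℝ | decide ((aEnd q (n+1) (Fin.snoc u true)).toReal ≤ x) = b} := by
        ext x
        simp only [mem_preimage, mem_singleton_iff, mem_iUnion, mem_inter_iff, mem_setOf_eq]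
        constructor
        · intro hx; exact ⟨vfun q x n, rfl, hx⟩
        · rintro ⟨u, hu, hx⟩; rw [hu]; exact hx
      rw [this]
      refine MeasurableSet.iUnion fun u => (hsing u).inter ?_
      cases b
      · have : {x : ℝ | decide ((aEnd q (n+1) (Fin.snoc u true)).toReal ≤ x) = false}
            = Iio ((aEnd q (n+1) (Fin.snoc u true)).toReal) := by
          ext x; simp only [mem_setOf_eq, decide_eq_false_iff_not, mem_Iio, not_le]
        rw [this]; exact measurableSet_Iio
      · have : {x : ℝ | decide ((aEnd q (n+1) (Fin.snoc u true)).toReal ≤ x) = true}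
            = Ici ((aEnd q (n+1) (Fin.snoc u true)).toReal) := by
          ext x; simp only [mem_setOf_eq, decide_eq_true_eq, mem_Ici]
        rw [this]; exact measurableSet_Ici
    apply measurable_pi_lambda
    intro i
    refine Fin.lastCases ?_ ?_ i
    · have : (fun x : ℝ => vfun q x (n+1) (Fin.last n)) = (fun x : ℝ =>
          decide ((aEnd q (n+1) (Fin.snoc (vfun q x n) true)).toReal ≤ x)) := by
        funext x
        show (Fin.snoc (vfun q x n) _ : Fin (n+1) → Bool) (Fin.last n) = _
        rw [Fin.snoc_last]
      rw [this]; exact hdec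
    · intro j
      have : (fun x : ℝ => vfun q x (n+1) (Fin.castSucc j)) = fun x : ℝ => vfun q x n j := by
        funext x
        show (Fin.snoc (vfun q x n) _ : Fin (n+1) → Bool) (Fin.castSucc j) = _
        rw [Fin.snoc_castSucc]
      rw [this]
      exact (measurable_pi_apply j).comp ih

lemma vfun_apply (x : ℝ) : ∀ n (i : Fin n), vfun q x n i = vfun q x (↑i + 1) (Fin.last ↑i) := by
  intro n
  induction n with
  | zero => intro i; exact i.elim0
  | succ n ih =>
    intro i
    refine Fin.lastCases ?_ ?_ i
    · rfl
    · intro j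
      have h1 : vfun q x (n+1) (Fin.castSucc j) = vfun q x n j := by
        show (Fin.snoc (vfun q x n) _ : Fin (n+1) → Bool) (Fin.castSucc j) = _
        rw [Fin.snoc_castSucc]
      rw [h1, ih j, Fin.coe_castSucc]

include hq1 hq2 in
lemma exists_prob_cyl :
    ∃ μ : Measure (ℕ → Bool), IsProbabilityMeasure μ ∧ ∀ n v, μ (NCyl n v) = q n v := by
  set f : ℝ → (ℕ → Bool) := fun x i => vfun q x (i+1) (Fin.last i) with hf
  have hfm : Measurable f :=
    measurable_pi_lambda _ fun i => (measurable_pi_apply (Fin.last i)).comp (measurable_vfun q (i+1))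
  have hIco : (volume.restrict (Ico (0:ℝ) 1)) (univ) = 1 := by
    rw [Measure.restrict_apply_univ, Real.volume_Ico]
    norm_num
  refine ⟨Measure.map f (volume.restrict (Ico (0:ℝ) 1)), ⟨?_⟩, ?_⟩
  · rw [Measure.map_apply hfm MeasurableSet.univ, preimage_univ, hIco]
  · intro n v
    rw [Measure.map_apply hfm (measurableSet_NCyl n v), Measure.restrict_apply (hfm (measurableSet_NCyl n v))]
    have hkey : f ⁻¹' (NCyl n v) ∩ Ico (0:ℝ) 1 = {x : ℝ | x ∈ Ico (0:ℝ) 1 ∧ vfun q x n = v} := by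
      ext x
      simp only [mem_inter_iff, mem_preimage, mem_setOf_eq, NCyl]
      constructor
      · rintro ⟨hx, hIc⟩
        refine ⟨hIc, funext fun i => ?_⟩
        rw [vfun_apply q x n i]
        exact hx i
      · rintro ⟨hIc, hv⟩
        refine ⟨fun i => ?_, hIc⟩
        rw [← hv, vfun_apply q x n i]
    rw [hkey, vfun_mem q hq1 hq2 n v, Real.volume_Ico,
      ENNReal.toReal_add (a_ne_top q hq1 hq2 n v) (q_ne_top q hq1 hq2 n v),
      add_sub_cancel_left, ENNReal.ofReal_toReal (q_ne_top q hq1 hq2 n v)]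

end NonrecAux

noncomputable section NonrecAux2

/-- two-sided cylinder -/
def cylSet (I : Finset ℤ) (w : ℤ → Bool) : Set (ℤ → Bool) := {ω | ∀ z ∈ I, ω z = w z}

lemma measurableSet_cylSet (I : Finset ℤ) (w : ℤ → Bool) : MeasurableSet (cylSet I w) := by
  have : cylSet I w = ⋂ z ∈ I, (fun ω : ℤ → Bool => ω z) ⁻¹' {w z} := by
    ext ω; simp [cylSet]
  rw [this]
  exact MeasurableSet.biInter I.countable_toSet
    (fun z _ => (measurable_pi_apply _) (measurableSet_singleton _))

/-- a cylinder over a singleton base is a `cylSet` -/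
lemma cylinder_singleton_eq_cylSet (s : Finset ℤ) (u : ∀ _ : s, Bool) :
    cylinder (α := fun _ : ℤ => Bool) s {u} = cylSet s (fun z => if h : z ∈ s then u ⟨z, h⟩ else false) := by
  ext ω
  simp only [mem_cylinder, mem_singleton_iff, cylSet, mem_setOf_eq]
  constructor
  · intro h z hz
    rw [dif_pos hz]
    exact congrFun h ⟨z, hz⟩
  · intro h
    funext i
    have := h i.1 i.2
    rw [dif_pos i.2] at this
    simpa [Finset.restrict] using this

/-- Two probability measures agreeing on all `cylSet`s are equal. -/
lemma ext_cylSet (μ ν : Measure (ℤ → Bool)) [IsProbabilityMeasure μ] [IsProbabilityMeasure ν]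
    (h : ∀ I w, μ (cylSet I w) = ν (cylSet I w)) : μ = ν := by
  refine ext_of_generate_finite (measurableCylinders (fun _ : ℤ => Bool))
    generateFrom_measurableCylinders.symm isPiSystem_measurableCylinders ?_ (by simp)
  intro t ht
  obtain ⟨s, S, hS, rfl⟩ := (mem_measurableCylinders t).mp ht
  classical
  -- decompose S into singletons
  have hdecomp : cylinder (α := fun _ : ℤ => Bool) s S = ⋃ u ∈ (Finset.univ.filter (fun u : (∀ _ : s, Bool) => u ∈ S)),
      cylinder (α := fun _ : ℤ => Bool) s {u} := by
    ext ω
    simp only [mem_cylinder, mem_iUnion, Finset.mem_filter, Finset.mem_univ, true_and,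
      mem_singleton_iff]
    constructor
    · intro hω; exact ⟨s.restrict ω, hω, rfl⟩
    · rintro ⟨u, hu, h⟩; rw [h]; exact hu
  rw [hdecomp]
  have hpd : ∀ (κ : Measure (ℤ → Bool)),
      κ (⋃ u ∈ (Finset.univ.filter (fun u : (∀ _ : s, Bool) => u ∈ S)), cylinder (α := fun _ : ℤ => Bool) s {u})
        = ∑ u ∈ (Finset.univ.filter (fun u : (∀ _ : s, Bool) => u ∈ S)), κ (cylinder (α := fun _ : ℤ => Bool) s {u}) := by
    intro κ
    refine measure_biUnion_finset ?_ ?_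
    · intro u _ u' _ huu'
      refine Set.disjoint_left.mpr fun ω hω hω' => huu' ?_
      simp only [mem_cylinder, mem_singleton_iff] at hω hω'
      rw [← hω, ← hω']
    · intro u _
      rw [cylinder_singleton_eq_cylSet]
      exact measurableSet_cylSet _ _
  rw [hpd μ, hpd ν]
  refine Finset.sum_congr rfl fun u _ => ?_
  rw [cylinder_singleton_eq_cylSet]
  exact h _ _

/-- ultrafilter limit in `ℝ≥0∞` -/
def ULim {ι : Type} (U : Ultrafilter ι) (g : ι → ℝ≥0∞) : ℝ≥0∞ := (U.map g).lim

lemma tendsto_ULim {ι : Type} (U : Ultrafilter ι) (g : ι → ℝ≥0∞) :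
    Filter.Tendsto g (↑U) (nhds (ULim U g)) :=
  (U.map g).le_nhds_lim

lemma ULim_const {ι : Type} (U : Ultrafilter ι) (c : ℝ≥0∞) : ULim U (fun _ => c) = c :=
  tendsto_nhds_unique (tendsto_ULim U _) tendsto_const_nhds

lemma ULim_add {ι : Type} (U : Ultrafilter ι) (g₁ g₂ : ι → ℝ≥0∞) :
    ULim U (fun i => g₁ i + g₂ i) = ULim U g₁ + ULim U g₂ :=
  tendsto_nhds_unique (tendsto_ULim U _) ((tendsto_ULim U g₁).add (tendsto_ULim U g₂))

lemma ULim_congr_zero {ι : Type} (U : Ultrafilter ι) (g : ι → ℝ≥0∞)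
    (h : {i | g i = 0} ∈ U) : ULim U g = 0 := by
  refine tendsto_nhds_unique (tendsto_ULim U g) ?_
  refine Filter.Tendsto.congr' ?_ tendsto_const_nhds
  exact Filter.eventuallyEq_of_mem h (fun i hi => hi.symm)

lemma le_ULim {ι : Type} (U : Ultrafilter ι) (g : ι → ℝ≥0∞) (c : ℝ≥0∞) (h : ∀ i, c ≤ g i) :
    c ≤ ULim U g :=
  ge_of_tendsto' (tendsto_ULim U g) h

lemma ULim_sum {ι γ : Type} (U : Ultrafilter ι) (s : Finset γ) (g : γ → ι → ℝ≥0∞) :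
    ULim U (fun i => ∑ c ∈ s, g c i) = ∑ c ∈ s, ULim U (g c) := by
  classical
  induction s using Finset.induction with
  | empty => simpa using ULim_const U 0
  | insert a s hne ih =>
    rw [Finset.sum_insert hne]
    have : (fun i => ∑ c ∈ insert a s, g c i) = fun i => g a i + ∑ c ∈ s, g c i := by
      funext i; rw [Finset.sum_insert hne]
    rw [this, ULim_add, ih]

end NonrecAux2

noncomputable section NonrecAux3

/-- the shift on `ℤ → Bool` -/
def shiftPerm : Equiv.Perm (ℤ → Bool) where
  toFun := fun ω i => ω (i + 1)
  invFun := fun ω i => ω (i - 1)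
  left_inv := fun ω => funext fun i => by simp
  right_inv := fun ω => funext fun i => by simp

lemma measurable_shiftPerm : Measurable (⇑shiftPerm) :=
  measurable_pi_lambda _ fun i => measurable_pi_apply (i + 1)

lemma measurable_shiftPerm_symm : Measurable (⇑shiftPerm.symm) :=
  measurable_pi_lambda _ fun i => measurable_pi_apply (i - 1)

lemma shiftPerm_zpow (z : ℤ) : ∀ (ω : ℤ → Bool) (i : ℤ), (shiftPerm ^ z) ω i = ω (i + z) := by
  induction z using Int.induction_on with
  | zero => intro ω i; simp
  | succ n ih =>
    intro ω i
    rw [zpow_add_one, Equiv.Perm.mul_apply, ih]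
    show ω (i + ↑n + 1) = _
    congr 1; ring
  | pred n ih =>
    intro ω i
    rw [zpow_sub_one, Equiv.Perm.mul_apply, ih]
    show ω (i + -↑n - 1) = _
    congr 1; ring

end NonrecAux3

noncomputable section NonrecAux4

/-- the forbidden-pattern set -/
def patternSet (k : ℕ) (n m : ℤ) : Set (ℤ → Bool) :=
  {ω | ∀ j ∈ Finset.range (k + 1), ω (m + (j : ℤ) * n) = true}

lemma patternSet_eq_cylSet (k : ℕ) (n m : ℤ) :
    patternSet k n m = cylSet ((Finset.range (k+1)).image (fun j : ℕ => m + (j : ℤ) * n))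
      (fun _ => true) := by
  ext ω
  simp only [patternSet, cylSet, mem_setOf_eq, Finset.mem_image]
  constructor
  · rintro h z ⟨j, hj, rfl⟩
    exact h j hj
  · intro h j hj
    exact h _ ⟨j, hj, rfl⟩

lemma measurableSet_patternSet (k : ℕ) (n m : ℤ) : MeasurableSet (patternSet k n m) := by
  rw [patternSet_eq_cylSet]; exact measurableSet_cylSet _ _

end NonrecAux4

noncomputable section NonrecAux5

/-- cylinder in `ℤ → Bool` along an enumeration -/
def ZCyl (e : ℕ ≃ ℤ) (n : ℕ) (v : Fin n → Bool) : Set (ℤ → Bool) :=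
  {ω | ∀ i : Fin n, ω (e ↑i) = v i}

lemma measurableSet_ZCyl (e : ℕ ≃ ℤ) (n : ℕ) (v : Fin n → Bool) :
    MeasurableSet (ZCyl e n v) := by
  have : ZCyl e n v = ⋂ i : Fin n, (fun ω : ℤ → Bool => ω (e ↑i)) ⁻¹' {v i} := by
    ext ω; simp [ZCyl]
  rw [this]
  exact MeasurableSet.iInter fun i => (measurable_pi_apply _) (measurableSet_singleton _)

lemma ZCyl_zero (e : ℕ ≃ ℤ) (v : Fin 0 → Bool) : ZCyl e 0 v = Set.univ := by
  ext ω; simp only [ZCyl, Set.mem_setOf_eq, Set.mem_univ, iff_true]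
  intro i; exact i.elim0

lemma mem_ZCyl_snoc (e : ℕ ≃ ℤ) (n : ℕ) (v : Fin n → Bool) (b : Bool) (ω : ℤ → Bool) :
    ω ∈ ZCyl e (n+1) (Fin.snoc v b) ↔ ω ∈ ZCyl e n v ∧ ω (e n) = b := by
  constructor
  · intro hω
    constructor
    · intro i
      have := hω (Fin.castSucc i)
      rwa [Fin.snoc_castSucc, Fin.coe_castSucc] at this
    · have := hω (Fin.last n)
      rwa [Fin.snoc_last, Fin.val_last] at this
  · rintro ⟨h1, h2⟩ i
    refine Fin.lastCases ?_ ?_ i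
    · rw [Fin.snoc_last, Fin.val_last]; exact h2
    · intro j; rw [Fin.snoc_castSucc, Fin.coe_castSucc]; exact h1 j

lemma ZCyl_split (e : ℕ ≃ ℤ) (n : ℕ) (v : Fin n → Bool) :
    ZCyl e n v = ZCyl e (n+1) (Fin.snoc v false) ∪ ZCyl e (n+1) (Fin.snoc v true) := by
  ext ω
  simp only [Set.mem_union, mem_ZCyl_snoc]
  constructor
  · intro hω
    cases hb : ω (e n)
    · exact Or.inl ⟨hω, rfl⟩
    · exact Or.inr ⟨hω, rfl⟩
  · rintro (⟨h, _⟩ | ⟨h, _⟩) <;> exact h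

lemma ZCyl_disjoint (e : ℕ ≃ ℤ) (n : ℕ) {v v' : Fin n → Bool} (hvv' : v ≠ v') :
    Disjoint (ZCyl e n v) (ZCyl e n v') := by
  refine Set.disjoint_left.mpr fun ω hω hω' => hvv' ?_
  funext i
  rw [← hω i, ← hω' i]

lemma NCyl_disjoint (n : ℕ) {v v' : Fin n → Bool} (hvv' : v ≠ v') :
    Disjoint (NCyl n v) (NCyl n v') := by
  refine Set.disjoint_left.mpr fun ω hω hω' => hvv' ?_
  funext i
  rw [← hω i, ← hω' i]

/-- reindexing map -/
def reindex (e : ℕ ≃ ℤ) : (ℕ → Bool) → (ℤ → Bool) := fun ω z => ω (e.symm z)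

lemma measurable_reindex (e : ℕ ≃ ℤ) : Measurable (reindex e) :=
  measurable_pi_lambda _ fun z => measurable_pi_apply (e.symm z)

lemma reindex_preimage_ZCyl (e : ℕ ≃ ℤ) (n : ℕ) (v : Fin n → Bool) :
    reindex e ⁻¹' ZCyl e n v = NCyl n v := by
  ext ω
  simp only [Set.mem_preimage, ZCyl, NCyl, Set.mem_setOf_eq, reindex, Equiv.symm_apply_apply]

/-- decomposition of a two-sided cylinder into enumeration cylinders -/
lemma cylSet_eq_biUnion (e : ℕ ≃ ℤ) (I : Finset ℤ) (w : ℤ → Bool) (n : ℕ)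
    (hn : ∀ z ∈ I, ∃ i : Fin n, e ↑i = z) :
    cylSet I w = ⋃ v ∈ Finset.univ.filter
        (fun v : Fin n → Bool => ∀ i : Fin n, e ↑i ∈ I → v i = w (e ↑i)),
      ZCyl e n v := by
  classical
  ext ω
  simp only [cylSet, Set.mem_setOf_eq, Set.mem_iUnion, Finset.mem_filter, Finset.mem_univ,
    true_and]
  constructor
  · intro hω
    refine ⟨fun i => ω (e ↑i), fun i hi => hω _ hi, fun i => rfl⟩
  · rintro ⟨v, hv, hωv⟩ z hz
    obtain ⟨i, rfl⟩ := hn z hz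
    rw [hωv i, hv i hz]

/-- The limit measure with prescribed cylinder values. -/
lemma exists_limit_measure {ι : Type} (U : Ultrafilter ι) (ν : ι → Measure (ℤ → Bool))
    (hν : ∀ i, IsProbabilityMeasure (ν i)) :
    ∃ μ : Measure (ℤ → Bool), IsProbabilityMeasure μ ∧
      ∀ I w, μ (cylSet I w) = ULim U (fun i => ν i (cylSet I w)) := by
  classical
  set e : ℕ ≃ ℤ := (Denumerable.eqv ℤ).symm with he
  set q : ∀ n, (Fin n → Bool) → ℝ≥0∞ := fun n v => ULim U (fun i => ν i (ZCyl e n v)) with hq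
  have hq1 : ∀ v, q 0 v = 1 := by
    intro v
    have : (fun i => ν i (ZCyl e 0 v)) = fun _ => (1 : ℝ≥0∞) := by
      funext i
      haveI := hν i
      rw [ZCyl_zero, measure_univ]
    rw [hq]; dsimp only; rw [this, ULim_const]
  have hq2 : ∀ n v, q (n+1) (Fin.snoc v false) + q (n+1) (Fin.snoc v true) = q n v := by
    intro n v
    rw [hq]; dsimp only
    rw [← ULim_add]
    congr 1
    funext i
    rw [← measure_union (ZCyl_disjoint e (n+1) (by
        intro hcon
        have := congrFun hcon (Fin.last n)
        rw [Fin.snoc_last, Fin.snoc_last] at this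
        exact Bool.false_ne_true this)) (measurableSet_ZCyl e (n+1) _), ← ZCyl_split]
  obtain ⟨μ₀, hμ₀p, hμ₀⟩ := exists_prob_cyl q hq1 hq2
  refine ⟨Measure.map (reindex e) μ₀, ?_, ?_⟩
  · exact Measure.isProbabilityMeasure_map (measurable_reindex e).aemeasurable
  · intro I w
    set n : ℕ := I.sup (fun z => e.symm z) + 1 with hn
    have hcov : ∀ z ∈ I, ∃ i : Fin n, e ↑i = z := by
      intro z hz
      refine ⟨⟨e.symm z, ?_⟩, by simp⟩
      have : e.symm z ≤ I.sup (fun z => e.symm z) := Finset.le_sup hz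
      omega
    set V := Finset.univ.filter
        (fun v : Fin n → Bool => ∀ i : Fin n, e ↑i ∈ I → v i = w (e ↑i)) with hV
    have hdec := cylSet_eq_biUnion e I w n hcov
    rw [Measure.map_apply (measurable_reindex e) (measurableSet_cylSet I w), hdec]
    have hpre : reindex e ⁻¹' (⋃ v ∈ V, ZCyl e n v) = ⋃ v ∈ V, NCyl n v := by
      rw [Set.preimage_iUnion₂]
      exact Set.iUnion₂_congr fun v _ => reindex_preimage_ZCyl e n v
    rw [hpre]
    rw [measure_biUnion_finset
      (fun v _ v' _ hvv' => NCyl_disjoint n hvv')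
      (fun v _ => measurableSet_NCyl n v)]
    have hz : ∀ i : ι, ν i (⋃ v ∈ V, ZCyl e n v) = ∑ v ∈ V, ν i (ZCyl e n v) := by
      intro i
      exact measure_biUnion_finset
        (fun v _ v' _ hvv' => ZCyl_disjoint e n hvv')
        (fun v _ => measurableSet_ZCyl e n v)
    calc ∑ v ∈ V, μ₀ (NCyl n v) = ∑ v ∈ V, q n v := by
          exact Finset.sum_congr rfl fun v _ => hμ₀ n v
      _ = ULim U (fun i => ∑ v ∈ V, ν i (ZCyl e n v)) := (ULim_sum U V _).symm
      _ = ULim U (fun i => ν i (⋃ v ∈ V, ZCyl e n v)) := by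
          congr 1; funext i; rw [hz i]

lemma shift_preimage_cylSet (I : Finset ℤ) (w : ℤ → Bool) :
    (⇑shiftPerm) ⁻¹' cylSet I w
      = cylSet (I.image (fun z => z + 1)) (fun z => w (z - 1)) := by
  ext ω
  simp only [Set.mem_preimage, cylSet, Set.mem_setOf_eq, Finset.mem_image]
  constructor
  · rintro h z ⟨z', hz', rfl⟩
    have : (shiftPerm ω) z' = w z' := h z' hz'
    simpa [shiftPerm] using this
  · intro h z hz
    have := h (z + 1) ⟨z, hz, rfl⟩
    simpa [shiftPerm] using this

lemma measurePreserving_shift_zpow (μ : Measure (ℤ → Bool))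
    (hmap : Measure.map (⇑shiftPerm) μ = μ) :
    ∀ z : ℤ, MeasurePreserving (⇑(shiftPerm ^ z)) μ μ := by
  have mp1 : MeasurePreserving (⇑shiftPerm) μ μ := ⟨measurable_shiftPerm, hmap⟩
  have hmapsymm : Measure.map (⇑shiftPerm.symm) μ = μ := by
    conv_lhs => rw [← hmap]
    rw [Measure.map_map measurable_shiftPerm_symm measurable_shiftPerm]
    have : (⇑shiftPerm.symm) ∘ (⇑shiftPerm) = id := by
      funext ω; exact shiftPerm.symm_apply_apply ω
    rw [this, Measure.map_id]
  have mps : MeasurePreserving (⇑shiftPerm.symm) μ μ := ⟨measurable_shiftPerm_symm, hmapsymm⟩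
  intro z
  induction z using Int.induction_on with
  | zero => rw [zpow_zero]; exact ⟨measurable_id, Measure.map_id⟩
  | succ n ih =>
    rw [zpow_add_one]
    have : (⇑(shiftPerm ^ (n : ℤ) * shiftPerm)) = ⇑(shiftPerm ^ (n : ℤ)) ∘ ⇑shiftPerm := rfl
    rw [this]
    exact ih.comp mp1
  | pred n ih =>
    rw [zpow_sub_one]
    have : (⇑(shiftPerm ^ (-n : ℤ) * shiftPerm⁻¹)) = ⇑(shiftPerm ^ (-n : ℤ)) ∘ ⇑shiftPerm.symm := rfl
    rw [this]
    exact ih.comp mps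

end NonrecAux5

/-- `S` is `(δ,k)`-nonrecurrent: there is an invertible probability measure preserving
system and a measurable `A` with `μ(A) > δ` such that
`A ∩ T^{−n}A ∩ ⋯ ∩ T^{−kn}A = ∅` for all `n ∈ S`. -/
def IsNonrec (δ : ℝ) (k : ℕ) (S : Set ℤ) : Prop :=
  ∃ (X : Type) (_ : MeasurableSpace X) (μ : Measure X) (T : Equiv.Perm X) (A : Set X),
    IsProbabilityMeasure μ ∧ (∀ n : ℤ, MeasurePreserving (⇑(T ^ n)) μ μ) ∧
    MeasurableSet A ∧ ENNReal.ofReal δ < μ A ∧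
    ∀ n ∈ S, ⋂ j ∈ Finset.range (k + 1), ⇑(T ^ ((j : ℤ) * n)) ⁻¹' A = ∅

lemma symbolic_measure (δ' : ℝ) (k : ℕ) (F : Set ℤ) (hF : IsNonrec δ' k F) :
    ∃ ν : Measure (ℤ → Bool), IsProbabilityMeasure ν ∧
      Measure.map (⇑shiftPerm) ν = ν ∧
      ENNReal.ofReal δ' ≤ ν (cylSet {(0:ℤ)} (fun _ => true)) ∧
      ∀ n ∈ F, ∀ m : ℤ, ν (patternSet k n m) = 0 := by
  classical
  obtain ⟨X, mX, μ, T, A, hprob, hmp, hA, hδ, hemp⟩ := hF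
  set φ : X → (ℤ → Bool) := fun x z => decide ((T ^ z) x ∈ A) with hφ
  have hφm : Measurable φ := by
    refine measurable_pi_lambda _ fun z => ?_
    apply measurable_to_countable'
    intro b
    cases b
    · have : (fun x => decide ((T ^ z) x ∈ A)) ⁻¹' {false} = ((⇑(T ^ z)) ⁻¹' A)ᶜ := by
        ext x
        simp [decide_eq_false_iff_not]
      rw [this]
      exact ((hmp z).measurable hA).compl
    · have : (fun x => decide ((T ^ z) x ∈ A)) ⁻¹' {true} = (⇑(T ^ z)) ⁻¹' A := by
        ext x
        simp [decide_eq_true_eq]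
      rw [this]
      exact (hmp z).measurable hA
  set ν : Measure (ℤ → Bool) := Measure.map φ μ with hν
  have hTmap : Measure.map (⇑T) μ = μ := by
    have := (hmp 1).map_eq
    rwa [zpow_one] at this
  have hTm : Measurable (⇑T) := by
    have := (hmp 1).measurable
    rwa [zpow_one] at this
  refine ⟨ν, Measure.isProbabilityMeasure_map hφm.aemeasurable, ?_, ?_, ?_⟩
  · -- shift invariance
    have hcomm : (⇑shiftPerm) ∘ φ = φ ∘ ⇑T := by
      funext x
      funext z
      have harg : (T ^ (z + 1)) x = (T ^ z) (T x) := by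
        rw [zpow_add_one]; rfl
      show (shiftPerm (φ x)) z = φ (T x) z
      show φ x (z + 1) = φ (T x) z
      simp only [hφ, harg]
    rw [hν, Measure.map_map measurable_shiftPerm hφm, hcomm,
      ← Measure.map_map hφm hTm, hTmap]
  · -- measure of C
    have hpre : φ ⁻¹' (cylSet {(0:ℤ)} (fun _ => true)) = A := by
      ext x
      simp only [cylSet, Set.mem_preimage, Set.mem_setOf_eq, Finset.mem_singleton,
        forall_eq, hφ]
      rw [decide_eq_true_eq, zpow_zero]
      simp
    rw [hν, Measure.map_apply hφm (measurableSet_cylSet _ _), hpre]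
    exact le_of_lt hδ
  · -- patterns vanish
    intro n hn m
    have hpre : φ ⁻¹' (patternSet k n m) = ∅ := by
      rw [Set.eq_empty_iff_forall_notMem]
      intro x hx
      simp only [patternSet, Set.mem_preimage, Set.mem_setOf_eq, hφ] at hx
      have hmem : (T ^ m) x ∈ ⋂ j ∈ Finset.range (k + 1), ⇑(T ^ ((j : ℤ) * n)) ⁻¹' A := by
        simp only [Set.mem_iInter, Set.mem_preimage]
        intro j hj
        have harg : (T ^ ((j : ℤ) * n)) ((T ^ m) x) = (T ^ (m + (j : ℤ) * n)) x := by
          rw [add_comm m, zpow_add]; rfl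
        rw [harg]
        have := hx j hj
        rwa [decide_eq_true_eq] at this
      rw [hemp n hn] at hmem
      exact hmem
    rw [hν, Measure.map_apply hφm (measurableSet_patternSet k n m), hpre]
    simp

/-- Compactness of nonrecurrence: if `0 ≤ δ < δ′` and every finite subset of `S` is
`(δ′,k)`-nonrecurrent, then `S` is `(δ,k)`-nonrecurrent. -/
theorem stmt13 (k : ℕ) (δ δ' : ℝ) (hδ : 0 ≤ δ) (hδδ' : δ < δ') (S : Set ℤ)
    (h : ∀ F : Finset ℤ, (F : Set ℤ) ⊆ S → IsNonrec δ' k (F : Set ℤ)) :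
    IsNonrec δ k S := by
  classical
  -- the directed index type of finite subsets of S
  haveI hne : Nonempty {F : Finset ℤ // (F : Set ℤ) ⊆ S} := ⟨⟨∅, by simp⟩⟩
  haveI : IsDirected {F : Finset ℤ // (F : Set ℤ) ⊆ S} (· ≤ ·) :=
    ⟨fun a b => ⟨⟨a.1 ∪ b.1, by rw [Finset.coe_union]; exact Set.union_subset a.2 b.2⟩,
      by exact_mod_cast Finset.subset_union_left,
      by exact_mod_cast Finset.subset_union_right⟩⟩
  haveI : (Filter.atTop : Filter {F : Finset ℤ // (F : Set ℤ) ⊆ S}).NeBot :=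
    Filter.atTop_neBot
  set U : Ultrafilter {F : Finset ℤ // (F : Set ℤ) ⊆ S} := Ultrafilter.of Filter.atTop with hU
  have hUmem : ∀ n ∈ S, {F : {F : Finset ℤ // (F : Set ℤ) ⊆ S} | n ∈ F.1} ∈ U := by
    intro n hn
    have hmem : {F : {F : Finset ℤ // (F : Set ℤ) ⊆ S} | n ∈ F.1}
        ∈ (Filter.atTop : Filter {F : Finset ℤ // (F : Set ℤ) ⊆ S}) := by
      refine Filter.mem_of_superset
        (Filter.Ici_mem_atTop (⟨{n}, by simpa using hn⟩ : {F : Finset ℤ // (F : Set ℤ) ⊆ S})) ?_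
      intro F hF
      have hsub : ({n} : Finset ℤ) ⊆ F.1 := hF
      exact hsub (Finset.mem_singleton_self n)
    exact Ultrafilter.of_le Filter.atTop hmem
  -- symbolic measures attached to every finite subset
  choose ν hνprob hνinv hνC hνpat using
    fun F : {F : Finset ℤ // (F : Set ℤ) ⊆ S} => symbolic_measure δ' k (F.1 : Set ℤ) (h F.1 F.2)
  -- the limit measure
  obtain ⟨μ, hμprob, hμcyl⟩ := exists_limit_measure U ν hνprob
  haveI := hμprob
  -- shift invariance of the limit measure
  have hinv : Measure.map (⇑shiftPerm) μ = μ := by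
    haveI : IsProbabilityMeasure (Measure.map (⇑shiftPerm) μ) :=
      Measure.isProbabilityMeasure_map measurable_shiftPerm.aemeasurable
    refine ext_cylSet _ _ fun I w => ?_
    rw [Measure.map_apply measurable_shiftPerm (measurableSet_cylSet I w),
      shift_preimage_cylSet, hμcyl, hμcyl]
    congr 1
    funext F
    rw [← shift_preimage_cylSet,
      ← Measure.map_apply measurable_shiftPerm (measurableSet_cylSet I w), hνinv F]
  -- the positive-measure set
  set C : Set (ℤ → Bool) := cylSet {(0:ℤ)} (fun _ => true) with hC
  set N : Set (ℤ → Bool) := ⋃ n ∈ S, ⋃ m : ℤ, patternSet k n m with hN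
  have hNmeas : MeasurableSet N :=
    MeasurableSet.biUnion S.to_countable
      (fun n _ => MeasurableSet.iUnion (fun m => measurableSet_patternSet k n m))
  have hNnull : μ N = 0 := by
    rw [hN]
    rw [measure_biUnion_null_iff S.to_countable]
    intro n hn
    rw [measure_iUnion_null_iff]
    intro m
    rw [patternSet_eq_cylSet, hμcyl]
    refine ULim_congr_zero U _ ?_
    refine Filter.mem_of_superset (hUmem n hn) ?_
    intro F hF
    have := hνpat F n (by exact_mod_cast hF) m
    rw [patternSet_eq_cylSet] at this
    exact this
  have hCA : ENNReal.ofReal δ' ≤ μ C := by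
    rw [hC, hμcyl]
    exact le_ULim U _ _ fun F => hνC F
  refine ⟨(ℤ → Bool), inferInstance, μ, shiftPerm, C \ N, hμprob,
    measurePreserving_shift_zpow μ hinv, (measurableSet_cylSet _ _).diff hNmeas, ?_, ?_⟩
  · rw [measure_diff_null hNnull]
    calc ENNReal.ofReal δ < ENNReal.ofReal δ' := by
          rw [ENNReal.ofReal_lt_ofReal_iff (lt_of_le_of_lt hδ hδδ')]
          exact hδδ'
      _ ≤ μ C := hCA
  · intro n hn
    rw [Set.eq_empty_iff_forall_notMem]
    intro ω hω
    simp only [Set.mem_iInter, Set.mem_preimage] at hω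
    have h0 : ω ∈ cylSet {(0:ℤ)} (fun _ => true) \ N := by
      have := hω 0 (Finset.mem_range.mpr (Nat.succ_pos k))
      simpa using this
    have hpat : ω ∈ patternSet k n 0 := by
      intro j hj
      have hj' := hω j hj
      have : ((shiftPerm ^ ((j : ℤ) * n)) ω) 0 = true := by
        have hmem := hj'.1
        rw [hC, cylSet] at hmem
        simpa using hmem 0 (Finset.mem_singleton_self 0)
      rwa [shiftPerm_zpow] at this
    exact h0.2 (Set.mem_biUnion hn (Set.mem_iUnion.mpr ⟨0, hpat⟩))
end

section
/- Let S ⊆ ℤ, k ∈ ℕ, δ ≥ 0, and δ′ > δ. Suppose for each N ∈ ℕ there is B_N ⊆ {0,…,N−1} with |B_N| ≥ δ′N such that ⋂_{j=0}^k (B_N − js) = ∅ for all s ∈ S. Then there is an invertible probability measure preserving system (X, ℬ, μ, T) and a measurable A ⊆ X with μ(A) > δ such that μ(⋂_{j=0}^k T^{−js}A) = 0 for all s ∈ S. -/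
open MeasureTheory Set Filter Topology
open scoped NNReal ENNReal

noncomputable section FCaux

abbrev XX : Type := ℤ → Bool

/-- The shift by `n`. -/
def Tn (n : ℤ) : Equiv.Perm XX where
  toFun x := fun m => x (m + n)
  invFun x := fun m => x (m - n)
  left_inv x := by funext m; simp
  right_inv x := by funext m; simp

lemma Tn_apply (n : ℤ) (x : XX) (m : ℤ) : Tn n x m = x (m + n) := rfl

lemma Tn_mul (a b : ℤ) : Tn a * Tn b = Tn (a + b) := by
  ext x m
  simp [Tn_apply, Equiv.Perm.mul_apply, add_assoc, add_comm b a]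

lemma Tn_zero : Tn 0 = 1 := by ext x m; simp [Tn_apply]

lemma Tn_pow (n : ℤ) : (Tn 1) ^ n = Tn n := by
  induction n using Int.induction_on with
  | zero => simpa using Tn_zero.symm
  | succ i ih => rw [zpow_add, zpow_one, ih, Tn_mul]
  | pred i ih =>
      have h1 : Tn (-(i:ℤ) - 1) * Tn 1 = Tn (-(i:ℤ)) := by rw [Tn_mul]; ring_nf
      calc (Tn 1) ^ (-(i:ℤ) - 1) = (Tn 1) ^ (-(i:ℤ)) * ((Tn 1) ^ (1:ℤ))⁻¹ := by
            rw [zpow_sub]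
        _ = Tn (-(i:ℤ) - 1) := by
            rw [ih, zpow_one, mul_inv_eq_iff_eq_mul]; exact h1.symm

lemma Tn_continuous (n : ℤ) : Continuous (Tn n) :=
  continuous_pi fun m => continuous_apply (m + n)

lemma Tn_measurable (n : ℤ) : Measurable (Tn n) := (Tn_continuous n).measurable

/-- The cylinder set `A`. -/
def AA : Set XX := {x | x 0 = true}

lemma AA_clopen : IsClopen AA := by
  have : AA = (fun x : XX => x 0) ⁻¹' {true} := rfl
  rw [this]
  exact (isClopen_discrete _).preimage (continuous_apply 0)

lemma AA_mem (x : XX) : x ∈ AA ↔ x 0 = true := Iff.rfl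

/-- Our fixed ultrafilter extending `atTop`. -/
def UF : Ultrafilter ℕ := Ultrafilter.of atTop

lemma UF_le : (UF : Filter ℕ) ≤ atTop := Ultrafilter.of_le _

/-- Limit along the ultrafilter. -/
def L (f : ℕ → ℝ) : ℝ := limUnder (UF : Filter ℕ) f

lemma tendsto_L {f : ℕ → ℝ} (hf : ∀ N, f N ∈ Icc (0:ℝ) 1) :
    Tendsto f (UF : Filter ℕ) (𝓝 (L f)) := by
  obtain ⟨a, -, ha⟩ := isCompact_Icc.ultrafilter_le_nhds (UF.map f)
    (by rw [le_principal_iff, Ultrafilter.mem_coe, Ultrafilter.mem_map]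
        exact Filter.univ_mem' hf)
  have ht : Tendsto f (UF : Filter ℕ) (𝓝 a) := ha
  rwa [show L f = a from ht.limUnder_eq]

lemma L_eq {f : ℕ → ℝ} {a : ℝ} (h : Tendsto f (UF : Filter ℕ) (𝓝 a)) : L f = a :=
  h.limUnder_eq


section Emp
variable (b : ℕ → Finset ℤ)

/-- The point of `XX` given by the indicator of `b N`. -/
def pt (N : ℕ) : XX := fun m => decide (m ∈ b N)

/-- Empirical average of the indicator of `C` along the first `N` shifts of `pt b N`. -/
def e (N : ℕ) (C : Set XX) : ℝ :=
  (∑ n ∈ Finset.range N, C.indicator (fun _ => (1:ℝ)) (Tn n (pt b N))) / N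

lemma ind_mem (C : Set XX) (x : XX) :
    C.indicator (fun _ => (1:ℝ)) x ∈ Icc (0:ℝ) 1 := by
  unfold Set.indicator
  split <;> simp

lemma e_mem (N : ℕ) (C : Set XX) : e b N C ∈ Icc (0:ℝ) 1 := by
  constructor
  · apply div_nonneg _ (Nat.cast_nonneg N)
    exact Finset.sum_nonneg fun n _ => (ind_mem C _).1
  · rcases Nat.eq_zero_or_pos N with h | h
    · simp [e, h]
    · unfold e
      rw [div_le_one (by exact_mod_cast h)]
      calc ∑ n ∈ Finset.range N, C.indicator (fun _ => (1:ℝ)) (Tn n (pt b N))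
          ≤ ∑ _n ∈ Finset.range N, (1:ℝ) :=
            Finset.sum_le_sum fun n _ => (ind_mem C _).2
        _ = N := by simp

lemma e_union (N : ℕ) {C D : Set XX} (h : Disjoint C D) :
    e b N (C ∪ D) = e b N C + e b N D := by
  unfold e
  rw [← add_div, ← Finset.sum_add_distrib]
  congr 1
  refine Finset.sum_congr rfl fun n _ => ?_
  rw [Set.indicator_union_of_disjoint h]

lemma e_mono (N : ℕ) {C D : Set XX} (h : C ⊆ D) : e b N C ≤ e b N D := by
  rcases Nat.eq_zero_or_pos N with h0 | h0
  · simp [e, h0]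
  · unfold e
    rw [div_le_div_iff_of_pos_right (by exact_mod_cast h0)]
    exact Finset.sum_le_sum fun n _ =>
      Set.indicator_le_indicator_of_subset h (fun _ => zero_le_one) _

lemma e_univ {N : ℕ} (hN : 1 ≤ N) : e b N univ = 1 := by
  unfold e
  simp only [Set.indicator_univ, Finset.sum_const, Finset.card_range, nsmul_eq_mul, mul_one]
  exact div_self (Nat.cast_ne_zero.mpr (by omega))

/-- The invariant limit functional. -/
def nu (C : Set XX) : ℝ := L (fun N => e b N C)

lemma tendsto_nu (C : Set XX) :
    Tendsto (fun N => e b N C) (UF : Filter ℕ) (𝓝 (nu b C)) :=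
  tendsto_L fun N => e_mem b N C

lemma nu_nonneg (C : Set XX) : 0 ≤ nu b C :=
  ge_of_tendsto (tendsto_nu b C) (Eventually.of_forall fun N => (e_mem b N C).1)

lemma nu_le_one (C : Set XX) : nu b C ≤ 1 :=
  le_of_tendsto (tendsto_nu b C) (Eventually.of_forall fun N => (e_mem b N C).2)

lemma nu_mono {C D : Set XX} (h : C ⊆ D) : nu b C ≤ nu b D :=
  le_of_tendsto_of_tendsto' (tendsto_nu b C) (tendsto_nu b D) fun N => e_mono b N h

lemma nu_union {C D : Set XX} (h : Disjoint C D) :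
    nu b (C ∪ D) = nu b C + nu b D := by
  have := (tendsto_nu b C).add (tendsto_nu b D)
  have h2 : Tendsto (fun N => e b N (C ∪ D)) (UF : Filter ℕ) (𝓝 (nu b C + nu b D)) := by
    simpa [e_union b _ h] using this
  exact tendsto_nhds_unique (tendsto_nu b (C ∪ D)) h2

lemma nu_univ : nu b univ = 1 := by
  refine L_eq ?_
  have : ∀ᶠ N in (UF : Filter ℕ), e b N univ = 1 := by
    apply UF_le
    filter_upwards [eventually_ge_atTop 1] with N hN
    exact e_univ b hN
  exact Tendsto.congr' (this.mono fun N h => h.symm) tendsto_const_nhds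


lemma e_shift (N : ℕ) (j : ℤ) (C : Set XX) :
    |e b N (Tn j ⁻¹' C) - e b N C| ≤ |(j:ℝ)| / N := by
  set g : ℤ → ℝ := fun m => C.indicator (fun _ => (1:ℝ)) (Tn m (pt b N)) with hg
  have hg01 : ∀ m, g m ∈ Icc (0:ℝ) 1 := fun m => ind_mem C _
  set F : ℤ → ℝ := fun a => ∑ n ∈ Finset.range N, g (n + a) with hF
  have hpre : e b N (Tn j ⁻¹' C) = F j / N := by
    unfold e
    congr 1
    refine Finset.sum_congr rfl fun n _ => ?_
    have h1 : (Tn j ⁻¹' C).indicator (fun _ => (1:ℝ)) (Tn n (pt b N))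
        = C.indicator (fun _ => (1:ℝ)) (Tn j (Tn (n:ℤ) (pt b N))) := by
      by_cases hx : Tn (n:ℤ) (pt b N) ∈ Tn j ⁻¹' C
      · rw [Set.indicator_of_mem hx, Set.indicator_of_mem (Set.mem_preimage.mp hx)]
      · rw [Set.indicator_of_notMem hx,
          Set.indicator_of_notMem (fun hc => hx (Set.mem_preimage.mpr hc))]
    rw [h1]
    have h2 : Tn j (Tn (n:ℤ) (pt b N)) = Tn ((n:ℤ) + j) (pt b N) := by
      have := congrFun (congrArg (fun p : Equiv.Perm XX => (p : XX → XX)) (Tn_mul j n)) (pt b N)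
      simp only [Equiv.Perm.coe_mul, Function.comp_apply] at this
      rw [this, add_comm]
    rw [h2]
  have hE : e b N C = F 0 / N := by
    have h9 : F 0 = ∑ n ∈ Finset.range N, C.indicator (fun _ => (1:ℝ)) (Tn (n:ℤ) (pt b N)) := by
      refine Finset.sum_congr rfl fun n _ => ?_
      simp only [add_zero]; rfl
    rw [h9]
    rfl
  have hstep : ∀ a : ℤ, F (a + 1) = F a - g a + g (N + a) := by
    intro a
    have h0 : F (a + 1) = ∑ n ∈ Finset.range N, (fun n : ℕ => g ((n : ℤ) + a)) (n + 1) := by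
      refine Finset.sum_congr rfl fun n _ => ?_
      push_cast
      ring_nf
    have h1 : ∑ n ∈ Finset.range (N+1), (fun n : ℕ => g ((n : ℤ) + a)) n
        = ∑ n ∈ Finset.range N, (fun n : ℕ => g ((n : ℤ) + a)) (n + 1)
          + (fun n : ℕ => g ((n : ℤ) + a)) 0 := Finset.sum_range_succ' _ N
    have h2 : ∑ n ∈ Finset.range (N+1), (fun n : ℕ => g ((n : ℤ) + a)) n
        = ∑ n ∈ Finset.range N, (fun n : ℕ => g ((n : ℤ) + a)) n
          + (fun n : ℕ => g ((n : ℤ) + a)) N := Finset.sum_range_succ _ N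
    have h3 : F a = ∑ n ∈ Finset.range N, (fun n : ℕ => g ((n : ℤ) + a)) n := rfl
    rw [h0, h3]
    simp only [Nat.cast_zero, zero_add] at h1 h2
    have h4 := h1.symm.trans h2
    linarith [h4]
  have hstepabs : ∀ a : ℤ, |F (a + 1) - F a| ≤ 1 := by
    intro a
    rw [hstep a]
    have h1 := hg01 a
    have h2 := hg01 (N + a)
    rw [abs_le]
    constructor <;> simp only [Icc, mem_setOf_eq] at h1 h2 <;> nlinarith [h1.1, h1.2, h2.1, h2.2]
  have key : ∀ a : ℤ, |F a - F 0| ≤ |(a:ℝ)| := by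
    intro a
    induction a using Int.induction_on with
    | zero => simp
    | succ i ih =>
        calc |F ((i:ℤ) + 1) - F 0| ≤ |F ((i:ℤ)+1) - F (i:ℤ)| + |F (i:ℤ) - F 0| := abs_sub_le _ _ _
          _ ≤ 1 + (i:ℝ) := by
              have := hstepabs (i:ℤ)
              have h2 : |((i:ℤ):ℝ)| = (i:ℝ) := by
                rw [abs_of_nonneg] <;> push_cast <;> simp
              rw [h2] at ih
              linarith
          _ = |(((i:ℤ)+1 : ℤ):ℝ)| := by
              rw [abs_of_nonneg] <;> push_cast <;> [ring; positivity]
    | pred i ih =>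
        calc |F (-(i:ℤ) - 1) - F 0|
            ≤ |F (-(i:ℤ)-1) - F (-(i:ℤ))| + |F (-(i:ℤ)) - F 0| := abs_sub_le _ _ _
          _ ≤ 1 + (i:ℝ) := by
              have h1 := hstepabs (-(i:ℤ) - 1)
              have h3 : (-(i:ℤ) - 1) + 1 = -(i:ℤ) := by ring
              rw [h3] at h1
              rw [abs_sub_comm] at h1
              have h2 : |((-(i:ℤ) : ℤ):ℝ)| = (i:ℝ) := by
                push_cast
                rw [abs_neg, abs_of_nonneg] <;> simp
              rw [h2] at ih
              linarith
          _ = |((-(i:ℤ)-1 : ℤ):ℝ)| := by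
              push_cast
              rw [abs_of_nonpos] <;> [ring; nlinarith [Nat.cast_nonneg (α := ℝ) i]]
  rw [hpre, hE, div_sub_div_same, abs_div]
  have hN : |(N:ℝ)| = (N:ℝ) := abs_of_nonneg (Nat.cast_nonneg N)
  rw [hN]
  rcases Nat.eq_zero_or_pos N with h0 | h0
  · simp [h0]
  · rw [div_le_div_iff_of_pos_right (by exact_mod_cast h0)]
    exact key j

lemma nu_shift (j : ℤ) (C : Set XX) : nu b (Tn j ⁻¹' C) = nu b C := by
  have h1 := tendsto_nu b (Tn j ⁻¹' C)
  have h2 := tendsto_nu b C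
  have h3 : Tendsto (fun N => e b N (Tn j ⁻¹' C) - e b N C) atTop (𝓝 0) := by
    apply squeeze_zero_norm (fun N => e_shift b N j C)
    simpa using tendsto_const_div_atTop_nhds_zero_nat |(j:ℝ)|
  have h4 := h3.mono_left UF_le
  have h5 := tendsto_nhds_unique (h1.sub h2) h4
  linarith


lemma e_union_le (N : ℕ) (C D : Set XX) : e b N (C ∪ D) ≤ e b N C + e b N D := by
  have hpt : ∀ x : XX, (C ∪ D).indicator (fun _ => (1:ℝ)) x
      ≤ C.indicator (fun _ => (1:ℝ)) x + D.indicator (fun _ => (1:ℝ)) x := by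
    intro x
    by_cases hx : x ∈ C ∪ D
    · rw [Set.indicator_of_mem hx]
      rcases hx with hx | hx
      · rw [Set.indicator_of_mem hx]
        have := (ind_mem D x).1
        linarith
      · rw [Set.indicator_of_mem (s := D) hx]
        have := (ind_mem C x).1
        linarith
    · rw [Set.indicator_of_notMem hx]
      have h1 := (ind_mem C x).1
      have h2 := (ind_mem D x).1
      linarith
  rcases Nat.eq_zero_or_pos N with h0 | h0
  · simp [e, h0]
  · unfold e
    rw [← add_div, div_le_div_iff_of_pos_right (by exact_mod_cast h0 : (0:ℝ) < N),
      ← Finset.sum_add_distrib]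
    exact Finset.sum_le_sum fun n _ => hpt _

lemma nu_union_le (C D : Set XX) : nu b (C ∪ D) ≤ nu b C + nu b D :=
  le_of_tendsto_of_tendsto' (tendsto_nu b (C ∪ D)) ((tendsto_nu b C).add (tendsto_nu b D))
    fun N => e_union_le b N C D

/-- Outer approximation by clopen sets. -/
def lam (K : Set XX) : ℝ := sInf (nu b '' {C | IsClopen C ∧ K ⊆ C})

lemma lam_set_nonempty (K : Set XX) : (nu b '' {C | IsClopen C ∧ K ⊆ C}).Nonempty :=
  ⟨nu b univ, univ, ⟨isClopen_univ, subset_univ K⟩, rfl⟩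

lemma lam_set_bdd (K : Set XX) : BddBelow (nu b '' {C | IsClopen C ∧ K ⊆ C}) := by
  refine ⟨0, ?_⟩
  rintro r ⟨C, -, rfl⟩
  exact nu_nonneg b C

lemma lam_le {K C : Set XX} (h : IsClopen C) (hKC : K ⊆ C) : lam b K ≤ nu b C :=
  csInf_le (lam_set_bdd b K) ⟨C, ⟨h, hKC⟩, rfl⟩

lemma le_lam {K : Set XX} {r : ℝ} (h : ∀ C, IsClopen C → K ⊆ C → r ≤ nu b C) :
    r ≤ lam b K := by
  refine le_csInf (lam_set_nonempty b K) ?_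
  rintro s ⟨C, ⟨hC, hKC⟩, rfl⟩
  exact h C hC hKC

lemma lam_nonneg (K : Set XX) : 0 ≤ lam b K :=
  le_lam b fun C _ _ => nu_nonneg b C

lemma lam_mono {K₁ K₂ : Set XX} (h : K₁ ⊆ K₂) : lam b K₁ ≤ lam b K₂ :=
  le_lam b fun C hC hKC => lam_le b hC (h.trans hKC)

lemma lam_clopen {C : Set XX} (h : IsClopen C) : lam b C = nu b C :=
  le_antisymm (lam_le b h subset_rfl) (le_lam b fun _D hD hCD => nu_mono b hCD)

lemma lam_union_le (K₁ K₂ : Set XX) : lam b (K₁ ∪ K₂) ≤ lam b K₁ + lam b K₂ := by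
  have h1 : ∀ C₂, IsClopen C₂ → K₂ ⊆ C₂ → lam b (K₁ ∪ K₂) - nu b C₂ ≤ lam b K₁ := by
    intro C₂ hC₂ hK₂
    refine le_lam b fun C₁ hC₁ hK₁ => ?_
    have hcalc : lam b (K₁ ∪ K₂) ≤ nu b C₁ + nu b C₂ :=
      (lam_le b (hC₁.union hC₂) (union_subset_union hK₁ hK₂)).trans (nu_union_le b C₁ C₂)
    linarith
  have h2 : lam b (K₁ ∪ K₂) - lam b K₁ ≤ lam b K₂ := by
    refine le_lam b fun C₂ hC₂ hK₂ => ?_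
    have := h1 C₂ hC₂ hK₂
    linarith
  linarith

lemma clopen_sep {K U : Set XX} (hK : IsCompact K) (hU : IsOpen U) (hKU : K ⊆ U) :
    ∃ V : Set XX, IsClopen V ∧ K ⊆ V ∧ V ⊆ U := by
  choose V hV hxV hVU using fun x : K => compact_exists_isClopen_in_isOpen hU (hKU x.2)
  obtain ⟨t, ht⟩ := hK.elim_finite_subcover (fun x : K => V x)
    (fun x => (hV x).isOpen) (fun x hx => mem_iUnion.mpr ⟨⟨x, hx⟩, hxV ⟨x, hx⟩⟩)
  refine ⟨⋃ x ∈ t, V x, ?_, ht, ?_⟩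
  · exact (t.finite_toSet).isClopen_biUnion fun x _ => hV x
  · exact iUnion₂_subset fun x _ => hVU x

lemma lam_sup_disjoint {K₁ K₂ : Set XX} (hK₁ : IsCompact K₁) (hd : Disjoint K₁ K₂)
    (h₂ : IsClosed K₂) : lam b (K₁ ∪ K₂) = lam b K₁ + lam b K₂ := by
  refine le_antisymm (lam_union_le b K₁ K₂) ?_
  obtain ⟨V, hV, hK₁V, hVK₂⟩ := clopen_sep hK₁ h₂.isOpen_compl hd.subset_compl_right
  refine le_lam b fun C hC hKC => ?_
  have hsplit : C = (C ∩ V) ∪ (C ∩ Vᶜ) := by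
    rw [← inter_union_distrib_left, union_compl_self, inter_univ]
  have hdisj : Disjoint (C ∩ V) (C ∩ Vᶜ) :=
    (disjoint_compl_right.mono inter_subset_right inter_subset_right)
  calc lam b K₁ + lam b K₂
      ≤ nu b (C ∩ V) + nu b (C ∩ Vᶜ) := by
        refine add_le_add (lam_le b (hC.inter hV) ?_) (lam_le b (hC.inter hV.compl) ?_)
        · exact subset_inter ((subset_union_left).trans hKC) hK₁V
        · exact subset_inter ((subset_union_right).trans hKC) fun x hx hVx => hVK₂ hVx hx
    _ = nu b C := by rw [← nu_union b hdisj, ← hsplit]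

/-- The content given by `lam`. -/
def cont : Content XX where
  toFun K := Real.toNNReal (lam b K)
  mono' K₁ K₂ h := Real.toNNReal_mono (lam_mono b h)
  sup_disjoint' K₁ K₂ hd h₁ h₂ := by
    simp only [TopologicalSpace.Compacts.coe_sup]
    rw [lam_sup_disjoint b (K₁ := (K₁ : Set XX)) (K₂ := (K₂ : Set XX)) K₁.isCompact hd h₂,
      Real.toNNReal_add (lam_nonneg b _) (lam_nonneg b _)]
  sup_le' K₁ K₂ := by
    simp only [TopologicalSpace.Compacts.coe_sup]
    rw [← Real.toNNReal_add (lam_nonneg b _) (lam_nonneg b _)]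
    exact Real.toNNReal_mono (lam_union_le b _ _)

/-- The invariant measure. -/
def mu : Measure XX := (cont b).measure

lemma mu_clopen {C : Set XX} (h : IsClopen C) : mu b C = ENNReal.ofReal (nu b C) := by
  rw [mu, Content.measure_apply _ h.isOpen.measurableSet]
  have h1 : (cont b).outerMeasure C = (cont b).innerContent ⟨C, h.isOpen⟩ :=
    Content.outerMeasure_opens _ ⟨C, h.isOpen⟩
  rw [h1, Content.innerContent_of_isCompact _ h.isClosed.isCompact h.isOpen]
  show ((Real.toNNReal (lam b C) : ℝ≥0) : ℝ≥0∞) = _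
  rw [lam_clopen b h]
  rfl


lemma cylinder_clopen {t : Set XX} (ht : t ∈ measurableCylinders (fun _ : ℤ => Bool)) :
    IsClopen t := by
  rw [mem_measurableCylinders] at ht
  obtain ⟨s, S, -, rfl⟩ := ht
  have hc : Continuous (s.restrict : XX → ((i : s) → Bool)) :=
    continuous_pi fun i => continuous_apply (i : ℤ)
  exact (isClopen_discrete S).preimage hc

lemma mu_prob : IsProbabilityMeasure (mu b) :=
  ⟨by rw [mu_clopen b isClopen_univ, nu_univ b, ENNReal.ofReal_one]⟩

lemma mu_map (n : ℤ) : (mu b).map (Tn n) = mu b := by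
  haveI := mu_prob b
  haveI : IsProbabilityMeasure ((mu b).map (Tn n)) :=
    Measure.isProbabilityMeasure_map (Tn_measurable n).aemeasurable
  refine ext_of_generate_finite (measurableCylinders (fun _ : ℤ => Bool))
    generateFrom_measurableCylinders.symm isPiSystem_measurableCylinders ?_ ?_
  · intro t ht
    have htc := cylinder_clopen ht
    rw [Measure.map_apply (Tn_measurable n) htc.isOpen.measurableSet,
      mu_clopen b (htc.preimage (Tn_continuous n)), mu_clopen b htc, nu_shift b n t]
  · rw [measure_univ, measure_univ]

lemma mu_preserving (n : ℤ) : MeasurePreserving (Tn n) (mu b) (mu b) :=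
  ⟨Tn_measurable n, mu_map b n⟩

end Emp
end FCaux



/-- Correspondence principle: if for each `N` there is `B_N ⊆ {0,…,N−1}` with
`|B_N| ≥ δ′N` and `⋂_{j=0}^k (B_N − js) = ∅` for all `s ∈ S`, then there is an invertible
probability measure preserving system and a measurable `A` with `μ(A) > δ` such that
`μ(⋂_{j=0}^k T^{−js}A) = 0` for all `s ∈ S`. -/
theorem stmt14 (S : Set ℤ) (k : ℕ) (δ δ' : ℝ) (hδ : 0 ≤ δ) (hδδ' : δ < δ')
    (B : ℕ → Finset ℕ) (hBsub : ∀ N, B N ⊆ Finset.range N)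
    (hBcard : ∀ N, δ' * N ≤ (B N).card)
    (hBint : ∀ N, ∀ s ∈ S,
      ⋂ j ∈ Finset.range (k + 1),
        (fun b : ℤ => b - (j : ℤ) * s) '' ((fun n : ℕ => (n : ℤ)) '' (B N : Set ℕ))
        = (∅ : Set ℤ)) :
    ∃ (X : Type) (_ : MeasurableSpace X) (μ : Measure X) (T : Equiv.Perm X) (A : Set X),
      IsProbabilityMeasure μ ∧ (∀ n : ℤ, MeasurePreserving (⇑(T ^ n)) μ μ) ∧
      MeasurableSet A ∧ ENNReal.ofReal δ < μ A ∧
      ∀ s ∈ S, μ (⋂ j ∈ Finset.range (k + 1), ⇑(T ^ ((j : ℤ) * s)) ⁻¹' A) = 0 := by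
  classical
  set b : ℕ → Finset ℤ := fun N => (B N).image (fun n : ℕ => (n : ℤ)) with hb
  have hmem : ∀ N : ℕ, ∀ m : ℤ, ∀ n : ℤ, (Tn m (pt b N) ∈ AA) ↔ m ∈ b N := by
    intro N m _
    rw [AA_mem]
    show decide (((0:ℤ) + m) ∈ b N) = true ↔ _
    rw [zero_add, decide_eq_true_iff]
  -- measure of A
  have hAAe : ∀ N : ℕ, 1 ≤ N → δ' ≤ e b N AA := by
    intro N hN
    have hterm : ∀ n : ℕ, AA.indicator (fun _ => (1:ℝ)) (Tn (n:ℤ) (pt b N))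
        = if n ∈ B N then (1:ℝ) else 0 := by
      intro n
      by_cases hn : n ∈ B N
      · rw [if_pos hn, Set.indicator_of_mem]
        rw [hmem N n n]
        exact Finset.mem_image_of_mem _ hn
      · rw [if_neg hn, Set.indicator_of_notMem]
        rw [hmem N n n]
        simp only [hb, Finset.mem_image, Nat.cast_inj]
        rintro ⟨m, hm, rfl⟩
        exact hn hm
    have hsum : ∑ n ∈ Finset.range N, AA.indicator (fun _ => (1:ℝ)) (Tn (n:ℤ) (pt b N))
        = (B N).card := by
      rw [Finset.sum_congr rfl fun n _ => hterm n]
      rw [← Finset.sum_subset (hBsub N) (fun x _ hx => if_neg hx)]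
      rw [Finset.sum_congr rfl fun n hn => if_pos hn]
      simp
    show δ' ≤ _ / _
    rw [hsum, le_div_iff₀ (by exact_mod_cast hN : (0:ℝ) < N)]
    exact hBcard N
  have hnuAA : δ' ≤ nu b AA := by
    refine ge_of_tendsto (tendsto_nu b AA) ?_
    apply UF_le
    filter_upwards [eventually_ge_atTop 1] with N hN
    exact hAAe N hN
  haveI := mu_prob b
  refine ⟨XX, inferInstance, mu b, Tn 1, AA, mu_prob b, ?_, AA_clopen.isOpen.measurableSet,
    ?_, ?_⟩
  · intro n
    have := mu_preserving b n
    rwa [← Tn_pow n] at this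
  · rw [mu_clopen b AA_clopen]
    rw [ENNReal.ofReal_lt_ofReal_iff_of_nonneg hδ]
    linarith
  · intro s hs
    simp only [Tn_pow]
    set Is : Set XX := ⋂ j ∈ Finset.range (k + 1), (Tn ((j:ℤ) * s)) ⁻¹' AA with hIs
    have hIsclopen : IsClopen Is :=
      (Finset.range (k+1)).finite_toSet.isClopen_biInter
        fun j _ => AA_clopen.preimage (Tn_continuous _)
    have hIse : ∀ N : ℕ, e b N Is = 0 := by
      intro N
      have hnot : ∀ n : ℕ, Tn (n:ℤ) (pt b N) ∉ Is := by
        intro n hnmem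
        have hforall : ∀ j ∈ Finset.range (k+1),
            ((n:ℤ)) ∈ (fun bb : ℤ => bb - (j : ℤ) * s) ''
              ((fun m : ℕ => (m : ℤ)) '' (B N : Set ℕ)) := by
          intro j hj
          rw [hIs, Set.mem_iInter₂] at hnmem
          have h1 := hnmem j hj
          rw [Set.mem_preimage] at h1
          have h2 : Tn ((j:ℤ)*s) (Tn (n:ℤ) (pt b N)) = Tn ((n:ℤ) + (j:ℤ)*s) (pt b N) := by
            have := congrFun (congrArg (fun p : Equiv.Perm XX => (p : XX → XX))
              (Tn_mul ((j:ℤ)*s) (n:ℤ))) (pt b N)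
            simp only [Equiv.Perm.coe_mul, Function.comp_apply] at this
            rw [this, add_comm]
          rw [h2, hmem N _ ((n:ℤ) + (j:ℤ)*s)] at h1
          simp only [hb, Finset.mem_image] at h1
          obtain ⟨m, hm, hmeq⟩ := h1
          refine ⟨(m:ℤ), ⟨m, hm, rfl⟩, ?_⟩
          show (m:ℤ) - (j:ℤ) * s = (n:ℤ)
          linarith [hmeq]
        have := hBint N s hs
        have hmem2 : ((n:ℤ)) ∈ ⋂ j ∈ Finset.range (k + 1),
            (fun bb : ℤ => bb - (j : ℤ) * s) '' ((fun m : ℕ => (m : ℤ)) '' (B N : Set ℕ)) :=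
          Set.mem_iInter₂.mpr hforall
        rw [this] at hmem2
        exact hmem2
      unfold e
      rw [Finset.sum_congr rfl fun n _ => Set.indicator_of_notMem (hnot n) _]
      simp
    have hnuIs : nu b Is = 0 := by
      have : (fun N => e b N Is) = fun _ => (0:ℝ) := funext hIse
      rw [nu, this]
      exact L_eq tendsto_const_nhds
    rw [mu_clopen b hIsclopen, hnuIs, ENNReal.ofReal_zero]
end

section
/- Let k < r ∈ ℕ, η > 0, y ∈ 𝕋^r, and let U = Hamm(y; k, η) ⊆ 𝕋^r be the approximate Hamming ball. Given k nontrivial characters χ₁, …, χ_k of 𝕋^r, there is a cylinder function g = (1/m(V))·1_V subordinate to U such that for every s ∈ 𝕋^r and every j ≤ k, the Fourier coefficient of the translate g_s(x) := g(x − s) at χ_j vanishes: ĝ_s(χ_j) = 0. -/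
open MeasureTheory

lemma coord_nontriv {r : ℕ} (χ : AddChar (Fin r → UnitAddCircle) Circle)
    (hχnt : χ ≠ 1) : ∃ i : Fin r, ∃ t : UnitAddCircle,
      χ (Pi.single i t) ≠ 1 := by
  by_contra h
  push_neg at h
  apply hχnt
  ext x
  have : x = ∑ i, (Pi.single i (x i) : Fin r → UnitAddCircle) :=
    (Finset.univ_sum_single x).symm
  rw [this]
  have : ∀ s : Finset (Fin r), χ (∑ i ∈ s, (Pi.single i (x i) : Fin r → UnitAddCircle)) = 1 := by
    intro s
    induction s using Finset.induction with
    | empty => simp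
    | insert _ _ hi ih =>
      rw [Finset.sum_insert hi, AddChar.map_add_eq_mul, ih, h, one_mul]
  simp [this]

/-- Given `k < r`, `η > 0`, `y ∈ 𝕋^r`, and `k` nontrivial characters `χ₁, …, χ_k` of `𝕋^r`,
there is a cylinder function `g = (1/m(V))·1_V` subordinate to the approximate Hamming ball
`Hamm(y; k, η)` (i.e. `V = V_{I,y,η}` with `|I| = r − k`) such that every translate `g_s`
has vanishing Fourier coefficient at each `χ_j`. -/
theorem stmt16 (k r : ℕ) (hkr : k < r) (η : ℝ) (hη : 0 < η)
    (y : Fin r → UnitAddCircle)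
    (χ : Fin k → AddChar (Fin r → UnitAddCircle) Circle)
    (hχcont : ∀ j, Continuous (χ j)) (hχnt : ∀ j, χ j ≠ 1) :
    ∃ I : Finset (Fin r), I.card = r - k ∧
      ∀ (s : Fin r → UnitAddCircle) (j : Fin k),
        (∫ x, ((((volume {x : Fin r → UnitAddCircle | ∀ i ∈ I, ‖x i - y i‖ < η}).toReal)⁻¹
            * Set.indicator {x : Fin r → UnitAddCircle | ∀ i ∈ I, ‖x i - y i‖ < η}
                (fun _ => (1:ℝ)) (x - s) : ℝ) : ℂ)
          * (starRingEnd ℂ) ((χ j x : ℂ))) = 0 := by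
  choose f t hft using fun j => coord_nontriv (χ j) (hχnt j)
  obtain ⟨S, hSsub, hScard⟩ := Finset.exists_superset_card_eq
    (s := Finset.image f Finset.univ) (n := k)
    (Finset.card_image_le.trans (by simp)) (by simpa using hkr.le)
  refine ⟨Sᶜ, by simp [Finset.card_compl, hScard], ?_⟩
  intro s j
  set A : Set (Fin r → UnitAddCircle) := {x | ∀ i ∈ Sᶜ, ‖x i - y i‖ < η} with hA
  set G : (Fin r → UnitAddCircle) → ℂ := fun x =>
    ((((volume A).toReal)⁻¹ * Set.indicator A (fun _ => (1:ℝ)) (x - s) : ℝ) : ℂ)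
      * (starRingEnd ℂ) ((χ j x : ℂ)) with hG
  have hfjS : f j ∈ S := hSsub (by simp)
  set v : Fin r → UnitAddCircle := Pi.single (f j) (t j) with hv
  have key : ∀ x, G (x + v) = (starRingEnd ℂ) ((χ j v : ℂ)) * G x := by
    intro x
    have hind : Set.indicator A (fun _ => (1:ℝ)) ((x + v) - s)
        = Set.indicator A (fun _ => (1:ℝ)) (x - s) := by
      have hmem : ((x + v) - s) ∈ A ↔ (x - s) ∈ A := by
        constructor <;> intro hx i hi <;> have := hx i hi <;>
        · have hvi : v i = 0 := by
            rw [hv]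
            exact Pi.single_eq_of_ne
              (fun h => (Finset.mem_compl.mp hi) (by rw [h]; exact hfjS)) _
          simpa [hvi] using this
      by_cases hx : (x - s) ∈ A
      · rw [Set.indicator_of_mem hx, Set.indicator_of_mem (hmem.mpr hx)]
      · rw [Set.indicator_of_notMem hx, Set.indicator_of_notMem (fun h => hx (hmem.mp h))]
    rw [hG]
    simp only [hind, AddChar.map_add_eq_mul]
    push_cast [map_mul]
    ring
  have hint : ∫ x, G x = ∫ x, G (x + v) := (integral_add_right_eq_self G v).symm
  rw [integral_congr_ae (Filter.Eventually.of_forall key), integral_const_mul] at hint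
  have hne : (starRingEnd ℂ) ((χ j v : ℂ)) ≠ 1 := by
    intro h
    apply hft j
    have : ((χ j v : ℂ)) = 1 := by
      have := congrArg (starRingEnd ℂ) h
      simpa using this
    exact Subtype.ext (by simpa using this)
  have : ((starRingEnd ℂ) ((χ j v : ℂ)) - 1) * ∫ x, G x = 0 := by
    rw [sub_mul, one_mul, ← hint, sub_self]
  rcases mul_eq_zero.mp this with h | h
  · exact absurd (sub_eq_zero.mp h) hne
  · exact h
end
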